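/- arXiv:1210.1621 — 7 statements merged into one kernel-verified Lean document; each statement's English description precedes it below -/
import Mathlib

section
/- Assume c : ℕ → F satisfies c_0 = 0 and that Σ_{i=1}^n R_i q_{n−i} = c_n q_n holds in A for every n ≥ 1. Then for every partition λ = (λ_1,…,λ_s) of length s there exist coefficients c_{λμ} ∈ F, indexed by the partitions μ of weight |λ| with μ ≥ λ in dominance order, such that T.q_λ = Σ_{μ ⊢ |λ|, μ ≥ λ} c_{λμ} q_μ, each c_{λμ} lies in the additive subgroup of F generated by {c_k : k ≥ 1}, and c_{λλ} = (−1)^{s−1} c_{λ_s}. -/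
/-!
In the reflected indices `jₖ = λₖ - iₖ`, `T.q_λ = Σ_j R_{|λ| - |j|} ∏ q_{jₖ}`. Generalise the weight
`|λ|` to any `e` and sum out the first index `j₁ < λ₁ = a`: by the recurrence
`Σ_{i ≤ n} R_i q_{n-i} = c_n q_n`, the inner sum is `c_n q_n` minus a tail, and therefore
`T_e(a :: d) = Σ_j c_{e-|j|} q_{e-|j|} ∏ q_{jₖ} - Σ_t q_{a+t} T_{e-a-t}(d)`.
Induction on the length expresses `T.q_λ` as a combination of monomials `q_ν` with coefficients
in the additive group generated by the `c_k`. For each `i`, the new part (`e - |j|` or `a + t`)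
together with `i - 1` parts chosen for the tail carries at least the weight `λ₁ + ⋯ + λ_i`, which
is dominance. Only the `t = 0` branch reaches `ν = λ`; it contributes a sign at each step, and
`c_{λ_s}` at the last one.
-/

open Finset

/-- A partition as a weakly decreasing list of positive integers. -/
def IsPartitionList (l : List ℕ) : Prop := l.Pairwise (· ≥ ·) ∧ ∀ x ∈ l, 0 < x

/-- Dominance order: every partial sum of `μ` is at least that of `l`
(parts padded by zeros). -/
def Dominates (μ l : List ℕ) : Prop := ∀ i : ℕ, (l.take i).sum ≤ (μ.take i).sum

/-- `q_λ = q_{λ₁} ⋯ q_{λ_s}`. -/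
def qProd {A : Type*} [CommRing A] (q : ℤ → A) (l : List ℕ) : A := (l.map fun n => q n).prod

/-- `T.q_λ = Σ_{i₁,…,i_s ≥ 1} R_{i₁+⋯+i_s} q_{λ₁-i₁} ⋯ q_{λ_s-i_s}`, a finite
sum because `q` vanishes on negative integers. -/
def Tq {A : Type*} [CommRing A] (R : ℕ → A) (q : ℤ → A) (l : List ℕ) : A :=
  ∑ i ∈ Finset.Icc (1 : Fin l.length → ℕ) (fun j => l.get j),
    R (∑ j, i j) * ∏ j, q ((l.get j : ℤ) - i j)

/-- The weakly decreasing list of elements of a multiset. -/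
def sortDesc (m : Multiset ℕ) : List ℕ := Multiset.sort m (· ≥ ·)

/-- The partitions of weight `N`, as weakly decreasing lists. -/
def partitionsOfWeight (N : ℕ) : Finset (List ℕ) :=
  Finset.univ.image fun μ : Nat.Partition N => sortDesc μ.parts

lemma Multiset.sum_filter_ne_zero (m : Multiset ℕ) : (m.filter (· ≠ 0)).sum = m.sum := by
  induction m using Multiset.induction_on with
  | empty => rfl
  | cons x m ih => by_cases hx : x = 0 <;> simp [hx, ih]

lemma Multiset.prod_map_filter_ne_zero {M : Type*} [CommMonoid M] {f : ℕ → M} (hf : f 0 = 1)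
    (m : Multiset ℕ) : ((m.filter (· ≠ 0)).map f).prod = (m.map f).prod := by
  induction m using Multiset.induction_on with
  | empty => rfl
  | cons x m ih => by_cases hx : x = 0 <;> simp [hx, hf, ih]

lemma Fintype.sum_piFinset_succ {M α : Type*} [AddCommMonoid M] {n : ℕ} (S : Fin (n + 1) → Finset α)
    (f : (Fin (n + 1) → α) → M) :
    ∑ r ∈ Fintype.piFinset S, f r
      = ∑ x ∈ S 0, ∑ r ∈ Fintype.piFinset (Fin.tail S), f (Fin.cons x r) := by
  rw [← filter_true (Fintype.piFinset S), filter_piFinset_eq_map_consEquiv S fun _ => True,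
    filter_true, sum_map, sum_product]
  rfl

lemma List.Sublist.sum_le_sum_take {l' l : List ℕ} (h : l'.Sublist l) (hl : l.Pairwise (· ≥ ·))
    {i : ℕ} (hi : l'.length ≤ i) : l'.sum ≤ (l.take i).sum := by
  induction h generalizing i with
  | slnil => simp
  | @cons l₁ l₂ x _ ih =>
    obtain ⟨hx, hl⟩ := List.pairwise_cons.1 hl
    cases i with
    | zero => simp_all
    | succ i =>
      have htake : (l₂.take (i + 1)).sum ≤ x + (l₂.take i).sum := by
        by_cases hi' : i < l₂.length
        · rw [List.sum_take_succ l₂ i hi', add_comm]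
          exact Nat.add_le_add_right (hx _ (List.getElem_mem hi')) _
        · rw [List.take_of_length_le (by omega), List.take_of_length_le (by omega)]
          omega
      calc l₁.sum ≤ (l₂.take (i + 1)).sum := ih hl hi
        _ ≤ ((x :: l₂).take (i + 1)).sum := by simpa using htake
  | cons_cons x _ ih =>
    cases i with
    | zero => simp at hi
    | succ i => simpa using ih (List.pairwise_cons.1 hl).2 (by simpa using hi)

lemma Multiset.sum_le_sum_take {μ : List ℕ} (hμ : μ.Pairwise (· ≥ ·)) {ξ : Multiset ℕ}
    (hξ : ξ ≤ μ) {i : ℕ} (hi : Multiset.card ξ ≤ i) : ξ.sum ≤ (μ.take i).sum := by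
  induction ξ using Quotient.inductionOn with
  | h l =>
    obtain ⟨l', hperm, hsub⟩ := Multiset.coe_le.1 hξ
    rw [Multiset.quot_mk_to_coe, Multiset.sum_coe, ← hperm.sum_eq]
    exact hsub.sum_le_sum_take hμ (by simpa [hperm.length_eq] using hi)

lemma Finsupp.mapDomain_apply_mem {α β M : Type*} [AddCommGroup M] {G : AddSubgroup M} {f : α → β}
    (hf : Function.Injective f) {P : α →₀ M} (hP : ∀ a, P a ∈ G) (b : β) :
    P.mapDomain f b ∈ G := by
  by_cases hb : b ∈ Set.range f
  · obtain ⟨a, rfl⟩ := hb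
    rw [Finsupp.mapDomain_apply hf]
    exact hP a
  · rw [Finsupp.mapDomain_of_notMem_range _ _ hb]
    exact G.zero_mem

lemma Finsupp.mapDomain_cons_apply_of_notMem {M : Type*} [AddCommMonoid M] {x : ℕ}
    {ν : Multiset ℕ} (hx : x ∉ ν) (P : Multiset ℕ →₀ M) : P.mapDomain (x ::ₘ ·) ν = 0 :=
  Finsupp.mapDomain_of_notMem_range _ _ fun ⟨ν', hν'⟩ => hx (hν' ▸ Multiset.mem_cons_self x ν')

def extendZero {M : Type*} [Zero M] (f : ℕ → M) (n : ℤ) : M := if 0 < n then f n.toNat else 0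

section extendZero

variable {M : Type*} [Zero M] (f : ℕ → M)

lemma extendZero_of_nonpos {n : ℤ} (hn : n ≤ 0) : extendZero f n = 0 := if_neg (by omega)

lemma extendZero_natCast {n : ℕ} (hn : 0 < n) : extendZero f n = f n := by
  simp [extendZero, hn]

end extendZero

lemma extendZero_mem {M : Type*} [AddGroup M] {G : AddSubgroup M} {f : ℕ → M}
    (hf : ∀ k, 1 ≤ k → f k ∈ G) (n : ℤ) : extendZero f n ∈ G := by
  unfold extendZero
  split_ifs with hn
  · exact hf _ (by omega)
  · exact G.zero_mem

def indexBox (μ : List ℕ) : Finset (Fin μ.length → ℕ) := Fintype.piFinset fun k => range μ[k]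

lemma sum_lt_sum_of_mem_indexBox {μ : List ℕ} {j : Fin μ.length → ℕ} (hj : j ∈ indexBox μ)
    (hμ : μ ≠ []) : ∑ k, j k < μ.sum := by
  rw [← Fin.sum_univ_getElem μ]
  have : 0 < μ.length := List.length_pos_iff.2 hμ
  exact sum_lt_sum_of_nonempty ⟨⟨0, this⟩, mem_univ _⟩
    fun k _ => mem_range.1 (Fintype.mem_piFinset.1 hj k)

def boxMonomial {n : ℕ} (e : ℤ) (j : Fin n → ℕ) : Multiset ℕ :=
  (e - ↑(∑ k, j k)).toNat ::ₘ (List.ofFn j : Multiset ℕ).filter (· ≠ 0)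

/-- For `e = μ.sum` the last condition says that the `i` largest parts of `ν` add up to at least
`(μ.take i).sum`, i.e. that `ν` dominates `μ`. -/
def dominatingSet (μ : List ℕ) (e : ℤ) : Set (Multiset ℕ) :=
  {ν | (∀ x ∈ ν, 0 < x) ∧ (ν.sum : ℤ) = e ∧
    ∀ i, ∃ ξ ≤ ν, Multiset.card ξ ≤ i ∧ ν.sum ≤ ξ.sum + (μ.drop i).sum}

lemma cons_mem_dominatingSet {a t : ℕ} {d : List ℕ} {e : ℤ} {ν : Multiset ℕ} (ha : 0 < a)
    (he : e ≤ (a :: d).sum) (hν : ν ∈ dominatingSet d (e - a - t)) :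
    (a + t) ::ₘ ν ∈ dominatingSet (a :: d) e := by
  obtain ⟨hpos, hsum, hdom⟩ := hν
  simp only [List.sum_cons, Nat.cast_add] at he
  refine ⟨fun x hx => ?_, ?_, fun i => ?_⟩
  · rcases Multiset.mem_cons.1 hx with rfl | hx
    · omega
    · exact hpos x hx
  · simp only [Multiset.sum_cons, Nat.cast_add]
    omega
  · cases i with
    | zero =>
      refine ⟨0, Multiset.zero_le _, le_rfl, ?_⟩
      simp only [Multiset.sum_cons, Multiset.sum_zero, List.drop_zero, List.sum_cons, zero_add]
      omega
    | succ i =>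
      obtain ⟨ξ, hξ, hcard, hle⟩ := hdom i
      refine ⟨(a + t) ::ₘ ξ, Multiset.cons_le_cons _ hξ, by simpa using hcard, ?_⟩
      simp only [Multiset.sum_cons, List.drop_succ_cons]
      omega

lemma boxMonomial_mem_dominatingSet {a : ℕ} {d : List ℕ} {e : ℤ} {j : Fin d.length → ℕ}
    (hj : j ∈ indexBox d) (hpos : 0 < e - ↑(∑ k, j k)) (he : e ≤ (a :: d).sum) :
    boxMonomial e j ∈ dominatingSet (a :: d) e := by
  have hjd : List.Forall₂ (· ≤ ·) (List.ofFn j) d := by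
    simp only [indexBox, Fintype.mem_piFinset, mem_range] at hj
    simpa [List.forall₂_iff_get] using fun i hi => (hj ⟨i, hi⟩).le
  set x := (e - ↑(∑ k, j k)).toNat
  have hx : (x : ℤ) = e - ↑(∑ k, j k) := Int.toNat_of_nonneg hpos.le
  have hsum : (boxMonomial e j).sum = x + (List.ofFn j).sum := by
    rw [boxMonomial, Multiset.sum_cons, Multiset.sum_filter_ne_zero, Multiset.sum_coe]
  have hofFn : (List.ofFn j).sum = ∑ k, j k := List.sum_ofFn
  simp only [List.sum_cons, Nat.cast_add] at he
  refine ⟨fun y hy => ?_, ?_, fun i => ?_⟩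
  · rcases Multiset.mem_cons.1 hy with rfl | hy
    · omega
    · exact Nat.pos_of_ne_zero (Multiset.mem_filter.1 hy).2
  · rw [hsum, Nat.cast_add, hx, hofFn]
    ring
  · cases i with
    | zero =>
      refine ⟨0, Multiset.zero_le _, le_rfl, ?_⟩
      rw [hsum, Multiset.sum_zero, zero_add, List.drop_zero, List.sum_cons]
      omega
    | succ i =>
      refine ⟨x ::ₘ ((List.ofFn j).take i : Multiset ℕ).filter (· ≠ 0), ?_, ?_, ?_⟩
      · exact Multiset.cons_le_cons _ (Multiset.filter_le_filter _
          (Multiset.coe_le.2 (List.take_sublist _ _).subperm))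
      · rw [Multiset.card_cons, add_le_add_iff_right]
        refine (Multiset.card_le_card (Multiset.filter_le _ _)).trans ?_
        rw [Multiset.coe_card, List.length_take]
        exact min_le_left _ _
      · have hdrop := (List.forall₂_drop i hjd).sum_le_sum
        have := (List.ofFn j).sum_take_add_sum_drop i
        rw [hsum, Multiset.sum_cons, Multiset.sum_filter_ne_zero, Multiset.sum_coe,
          List.drop_succ_cons]
        omega

lemma dominates_of_coe_mem_dominatingSet {μ l : List ℕ} (hμ : μ.Pairwise (· ≥ ·))
    (h : (μ : Multiset ℕ) ∈ dominatingSet l l.sum) : Dominates μ l := fun i => by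
  obtain ⟨-, hsum, hdom⟩ := h
  obtain ⟨ξ, hξ, hcard, hle⟩ := hdom i
  have := Multiset.sum_le_sum_take hμ hξ hcard
  have := l.sum_take_add_sum_drop i
  rw [Multiset.sum_coe] at hsum hle
  omega

lemma pairwise_of_mem_partitionsOfWeight {N : ℕ} {μ : List ℕ} (hμ : μ ∈ partitionsOfWeight N) :
    μ.Pairwise (· ≥ ·) := by
  obtain ⟨p, -, rfl⟩ := mem_image.1 hμ
  exact Multiset.pairwise_sort _ _

lemma linearCombination_eq_sum_partitionsOfWeight {F M : Type*} [CommRing F] [AddCommMonoid M]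
    [Module F M] {N : ℕ} {v : Multiset ℕ → M} {P : Multiset ℕ →₀ F}
    (hP : P ∈ Finsupp.supported F F {ν | (∀ x ∈ ν, 0 < x) ∧ ν.sum = N}) :
    Finsupp.linearCombination F v P = ∑ μ ∈ partitionsOfWeight N, P μ • v μ := by
  have hsub : {ν : Multiset ℕ | (∀ x ∈ ν, 0 < x) ∧ ν.sum = N} ⊆
      ↑((partitionsOfWeight N).image ((↑) : List ℕ → Multiset ℕ)) := by
    rintro ν ⟨hpos, hsum⟩
    exact mem_image.2 ⟨sortDesc ν, mem_image.2 ⟨⟨ν, hpos _, hsum⟩, mem_univ _, rfl⟩,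
      Multiset.sort_eq _ _⟩
  rw [Finsupp.linearCombination_apply_of_mem_supported F (Finsupp.supported_mono hsub hP),
    sum_image fun μ hμ μ' hμ' h => List.Perm.eq_of_pairwise (fun _ _ _ _ h₁ h₂ => le_antisymm h₂ h₁)
      (pairwise_of_mem_partitionsOfWeight hμ) (pairwise_of_mem_partitionsOfWeight hμ')
      (Multiset.coe_eq_coe.1 h)]

section Expansion

variable {F A : Type*} [CommRing F] [CommRing A] [Algebra F A] {q : ℤ → A} {R : ℕ → A}
  {c : ℕ → F}

/-- The terms `R_k ∏ q_{jₖ}` with `jₖ < μₖ`, `k ≥ 1` and `k + Σ jₖ = e`; at `e = μ.sum` this is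
`Tq` written in the indices `jₖ = μₖ - iₖ`. -/
def TqOfWeight (R : ℕ → A) (q : ℤ → A) (μ : List ℕ) (e : ℤ) : A :=
  ∑ j ∈ indexBox μ, extendZero R (e - ↑(∑ k, j k)) * ∏ k, q (j k)

lemma Tq_eq_TqOfWeight {l : List ℕ} (hl : l ≠ []) : Tq R q l = TqOfWeight R q l l.sum := by
  have memIcc : ∀ i, i ∈ Icc 1 (fun k => l.get k) ↔ ∀ k, 1 ≤ i k ∧ i k ≤ l[k] := by
    simp [Pi.le_def, forall_and]
  have memBox : ∀ j, j ∈ indexBox l ↔ ∀ k, j k < l[k] := by simp [indexBox]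
  rw [Tq, TqOfWeight]
  refine sum_nbij' (fun i k => l[k] - i k) (fun j k => l[k] - j k) ?_ ?_ ?_ ?_ fun i hi => ?_
  · intro i hi
    simp only [memIcc, memBox] at hi ⊢
    exact fun k => by have := hi k; omega
  · intro j hj
    simp only [memIcc, memBox] at hj ⊢
    exact fun k => by have := hj k; omega
  · intro i hi
    simp only [memIcc] at hi
    exact funext fun k => by have := hi k; dsimp only; omega
  · intro j hj
    simp only [memBox] at hj
    exact funext fun k => by have := hj k; dsimp only; omega
  rw [memIcc] at hi
  have hsum : ∑ k, (l[k] - i k) + ∑ k, i k = l.sum := by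
    rw [← sum_add_distrib, ← Fin.sum_univ_getElem l]
    exact sum_congr rfl fun k _ => Nat.sub_add_cancel (hi k).2
  have hpos : 0 < ∑ k, i k := by
    have : 0 < l.length := List.length_pos_iff.2 hl
    exact sum_pos (fun k _ => (hi k).1) ⟨⟨0, this⟩, mem_univ _⟩
  have hR : (l.sum : ℤ) - ↑(∑ k, (l[k] - i k)) = ↑(∑ k, i k) := by omega
  rw [hR, extendZero_natCast R hpos]
  congr 1
  refine prod_congr rfl fun k _ => ?_
  rw [Nat.cast_sub (hi k).2]
  rfl

section Recurrence

variable (hrec : ∀ n : ℕ, 1 ≤ n → ∑ i ∈ Icc 1 n, R i * q ((n : ℤ) - i) = c n • q (n : ℤ))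
include hrec

lemma sum_range_extendZero_mul_of_le {n : ℤ} {N : ℕ} (hN : n ≤ N) :
    ∑ t ∈ range N, extendZero R (n - t) * q t = extendZero c n • q n := by
  rcases le_or_gt n 0 with hn | hn
  · rw [extendZero_of_nonpos c hn, zero_smul]
    exact sum_eq_zero fun t _ => by rw [extendZero_of_nonpos R (by omega), zero_mul]
  lift n to ℕ using hn.le
  obtain ⟨N, rfl⟩ : ∃ k, N = n + k := ⟨N - n, by omega⟩
  have htail : ∑ t ∈ range N, extendZero R (n - ↑(n + t)) * q ↑(n + t) = 0 :=
    sum_eq_zero fun t _ => by rw [extendZero_of_nonpos R (by push_cast; omega), zero_mul]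
  rw [sum_range_add, htail, add_zero, extendZero_natCast c (by omega), ← hrec n (by omega)]
  refine sum_nbij' (fun t => n - t) (fun i => n - i) ?_ ?_ ?_ ?_ fun t ht => ?_
  · intro t ht
    simp only [mem_range, mem_Icc] at ht ⊢
    omega
  · intro i hi
    simp only [mem_range, mem_Icc] at hi ⊢
    omega
  · intro t ht
    simp only [mem_range] at ht
    omega
  · intro i hi
    simp only [mem_Icc] at hi
    omega
  · simp only [mem_range] at ht
    rw [← Nat.cast_sub ht.le, extendZero_natCast R (by omega)]
    congr 2
    omega

lemma sum_range_extendZero_mul_eq_sub {s : ℤ} {a N : ℕ} (hs : s ≤ a + N) :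
    ∑ j ∈ range a, extendZero R (s - j) * q j
      = extendZero c s • q s - ∑ t ∈ range N, extendZero R (s - a - t) * q ↑(a + t) := by
  rw [eq_sub_iff_add_eq, ← sum_range_extendZero_mul_of_le hrec (N := a + N) (by exact_mod_cast hs),
    sum_range_add]
  congr 1
  refine sum_congr rfl fun t _ => ?_
  push_cast
  ring_nf

lemma TqOfWeight_cons (a : ℕ) (d : List ℕ) {e : ℤ} (he : e ≤ (a :: d).sum) :
    TqOfWeight R q (a :: d) e
      = ∑ j ∈ indexBox d, extendZero c (e - ↑(∑ k, j k)) • (q (e - ↑(∑ k, j k)) * ∏ k, q (j k))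
        - ∑ t ∈ range d.sum, q ↑(a + t) * TqOfWeight R q d (e - a - t) := by
  have hsplit : TqOfWeight R q (a :: d) e = ∑ j ∈ indexBox d,
      (∑ i ∈ range a, extendZero R (e - ↑(∑ k, j k) - i) * q i) * ∏ k, q (j k) := by
    refine (Fintype.sum_piFinset_succ (n := d.length) (fun k => range (a :: d)[k]) _).trans ?_
    rw [sum_comm]
    refine sum_congr rfl fun j _ => ?_
    rw [sum_mul]
    refine sum_congr rfl fun i _ => ?_
    simp only [List.length_cons, Fin.sum_univ_succ, Fin.cons_zero, Fin.cons_succ, Nat.cast_add,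
      Nat.cast_sum, Fin.prod_univ_succ]
    ring_nf
  have hbound : ∀ j ∈ indexBox d, e - ↑(∑ k, j k) ≤ ↑a + ↑d.sum := fun j _ => by
    simp only [List.sum_cons, Nat.cast_add] at he
    omega
  rw [hsplit, ← sum_congr rfl fun j hj => by
    rw [sum_range_extendZero_mul_eq_sub hrec (hbound j hj)]]
  simp_rw [sub_mul, sum_sub_distrib, smul_mul_assoc, sum_mul, TqOfWeight, mul_sum]
  rw [sum_comm]
  congr 1
  refine sum_congr rfl fun t _ => sum_congr rfl fun j _ => ?_
  ring_nf

end Recurrence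

def qMonomial (q : ℤ → A) (ν : Multiset ℕ) : A := (ν.map fun n : ℕ => q n).prod

lemma qMonomial_cons (x : ℕ) (ν : Multiset ℕ) : qMonomial q (x ::ₘ ν) = q x * qMonomial q ν := by
  simp [qMonomial]

lemma qMonomial_coe (l : List ℕ) : qMonomial q l = qProd q l := by
  induction l with
  | nil => rfl
  | cons x l ih => simp_all [qMonomial, qProd]

lemma qMonomial_boxMonomial (hq0 : q 0 = 1) {n : ℕ} {e : ℤ} {j : Fin n → ℕ}
    (hj : 0 ≤ e - ↑(∑ k, j k)) :
    qMonomial q (boxMonomial e j) = q (e - ↑(∑ k, j k)) * ∏ k, q (j k) := by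
  rw [boxMonomial, qMonomial_cons, Int.toNat_of_nonneg hj, qMonomial,
    Multiset.prod_map_filter_ne_zero (f := fun n : ℕ => q n) hq0]
  simp [List.prod_ofFn]

/-- The formal counterpart of `TqOfWeight_cons`: a combination of multisets `ν` standing for
`q_ν = ∏ q_{νᵢ}`. -/
noncomputable def expansion (c : ℕ → F) : List ℕ → ℤ → Multiset ℕ →₀ F
  | [], _ => 0
  | a :: d, e =>
    ∑ j ∈ indexBox d, Finsupp.single (boxMonomial e j) (extendZero c (e - ↑(∑ k, j k)))
      - ∑ t ∈ range d.sum, (expansion c d (e - a - t)).mapDomain ((a + t) ::ₘ ·)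

lemma expansion_apply_mem {G : AddSubgroup F} (hc : ∀ k, 1 ≤ k → c k ∈ G) :
    ∀ (μ : List ℕ) (e : ℤ) (ν : Multiset ℕ), expansion c μ e ν ∈ G
  | [], _, _ => G.zero_mem
  | a :: d, e, ν => by
    rw [expansion, Finsupp.sub_apply, Finsupp.finsetSum_apply, Finsupp.finsetSum_apply]
    refine G.sub_mem (G.sum_mem fun j _ => ?_) (G.sum_mem fun t _ => ?_)
    · rw [Finsupp.single_apply]
      split_ifs
      exacts [extendZero_mem hc _, G.zero_mem]
    · exact Finsupp.mapDomain_apply_mem (fun _ _ => (Multiset.cons_inj_right _).1)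
        (expansion_apply_mem hc d _) ν

lemma expansion_mem_supported : ∀ {μ : List ℕ} {e : ℤ}, (∀ x ∈ μ, 0 < x) → e ≤ μ.sum →
    expansion c μ e ∈ Finsupp.supported F F (dominatingSet μ e)
  | [], _, _, _ => zero_mem _
  | a :: d, e, hμ, he => by
    have ha : 0 < a := hμ a List.mem_cons_self
    have hd : ∀ x ∈ d, 0 < x := fun x hx => hμ x (List.mem_cons_of_mem a hx)
    rw [expansion]
    refine sub_mem (sum_mem fun j hj => ?_) (sum_mem fun t _ => ?_)
    · rcases le_or_gt (e - ↑(∑ k, j k)) 0 with h | h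
      · rw [extendZero_of_nonpos c h, Finsupp.single_zero]
        exact zero_mem _
      · exact Finsupp.single_mem_supported F _ (boxMonomial_mem_dominatingSet hj h he)
    · have hdt : e - a - t ≤ d.sum := by
        simp only [List.sum_cons, Nat.cast_add] at he
        omega
      exact Finsupp.supported_comap_lmapDomain F F _ _ (Finsupp.supported_mono
        (fun ν hν => cons_mem_dominatingSet ha he hν) (expansion_mem_supported hd hdt))

lemma expansion_apply_self :
    ∀ {μ : List ℕ}, μ.Pairwise (· ≥ ·) → (∀ x ∈ μ, 0 < x) → (hμ : μ ≠ []) →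
      expansion c μ μ.sum μ = (-1) ^ (μ.length - 1) * c (μ.getLast hμ)
  | [], _, _, h => absurd rfl h
  | [a], _, hpos, _ => by
    simp [expansion, indexBox, boxMonomial, extendZero_natCast c (hpos a List.mem_cons_self)]
  | a :: b :: d, hsort, hpos, _ => by
    obtain ⟨hle, hsort'⟩ := List.pairwise_cons.1 hsort
    have hlt : ∀ y, a < y → y ∉ (↑(a :: b :: d) : Multiset ℕ) := fun y hy hmem => by
      rcases List.mem_cons.1 (Multiset.mem_coe.1 hmem) with rfl | hmem
      · omega
      · exact absurd (hle y hmem) (by omega)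
    have hbox : ∀ j ∈ indexBox (b :: d),
        Finsupp.single (boxMonomial ((a :: b :: d).sum : ℤ) j)
          (extendZero c ((a :: b :: d).sum - ↑(∑ k, j k))) ↑(a :: b :: d) = 0 := fun j hj => by
      refine Finsupp.single_eq_of_ne fun h => hlt ((a :: b :: d).sum - ↑(∑ k, j k) : ℤ).toNat ?_
        (by rw [h]; exact Multiset.mem_cons_self _ _)
      have := sum_lt_sum_of_mem_indexBox hj (List.cons_ne_nil b d)
      simp only [List.sum_cons] at this ⊢
      omega
    have htail : ∀ t ∈ range (b :: d).sum, t ≠ 0 →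
        (expansion c (b :: d) ((a :: b :: d).sum - a - t)).mapDomain ((a + t) ::ₘ ·)
          ↑(a :: b :: d) = 0 := fun t _ ht =>
      Finsupp.mapDomain_cons_apply_of_notMem (hlt _ (by omega)) _
    have hhead : (↑(a :: b :: d) : Multiset ℕ) = (a + 0) ::ₘ ↑(b :: d) := rfl
    have h0 : 0 ∈ range (b :: d).sum := by
      have := hpos b (by simp)
      simp only [List.sum_cons, mem_range]
      omega
    rw [expansion, Finsupp.sub_apply, Finsupp.finsetSum_apply, Finsupp.finsetSum_apply,
      sum_eq_zero hbox, sum_eq_single_of_mem 0 h0 htail,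
      hhead, Finsupp.mapDomain_apply (fun _ _ => (Multiset.cons_inj_right _).1)]
    have hd : ((a :: b :: d).sum : ℤ) - a - ↑(0 : ℕ) = (b :: d).sum := by simp
    rw [hd, expansion_apply_self hsort' (fun x hx => hpos x (List.mem_cons_of_mem a hx))
      (List.cons_ne_nil b d)]
    simp [pow_succ]

lemma linearCombination_expansion
    (hrec : ∀ n : ℕ, 1 ≤ n → ∑ i ∈ Icc 1 n, R i * q ((n : ℤ) - i) = c n • q (n : ℤ))
    (hq0 : q 0 = 1) :
    ∀ (μ : List ℕ) {e : ℤ}, e ≤ μ.sum →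
      Finsupp.linearCombination F (qMonomial q) (expansion c μ e) = TqOfWeight R q μ e
  | [], e, he => by simp [expansion, TqOfWeight, indexBox, extendZero_of_nonpos R he]
  | a :: d, e, he => by
    rw [expansion, TqOfWeight_cons hrec a d he, map_sub, map_sum, map_sum]
    congr 1
    · refine sum_congr rfl fun j _ => ?_
      rw [Finsupp.linearCombination_single]
      rcases le_or_gt (e - ↑(∑ k, j k)) 0 with h | h
      · rw [extendZero_of_nonpos c h, zero_smul, zero_smul]
      · rw [qMonomial_boxMonomial hq0 h.le]
    · refine sum_congr rfl fun t ht => ?_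
      have hcons : qMonomial q ∘ ((a + t) ::ₘ ·) = LinearMap.mulLeft F (q ↑(a + t)) ∘ qMonomial q :=
        funext fun ν => qMonomial_cons _ ν
      have hd : e - a - t ≤ d.sum := by
        simp only [List.sum_cons, Nat.cast_add] at he
        omega
      rw [Finsupp.linearCombination_mapDomain, hcons, ← Finsupp.apply_linearCombination,
        linearCombination_expansion hrec hq0 d hd, LinearMap.mulLeft_apply]

end Expansion

theorem generalized_newton_identity_general
    (F A : Type*) [Field F] [CommRing A] [Algebra F A]
    (q : ℤ → A) (R : ℕ → A) (c : ℕ → F)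
    (hq0 : q 0 = 1)
    (hrec : ∀ n : ℕ, 1 ≤ n →
      ∑ i ∈ Finset.Icc 1 n, R i * q ((n : ℤ) - i) = c n • q (n : ℤ))
    (l : List ℕ) (hl : IsPartitionList l) (hne : l ≠ []) :
    ∃ C : List ℕ → F,
      (∀ μ ∈ partitionsOfWeight l.sum, ¬ Dominates μ l → C μ = 0) ∧
      Tq R q l = ∑ μ ∈ partitionsOfWeight l.sum, C μ • qProd q μ ∧
      (∀ μ ∈ partitionsOfWeight l.sum,
        C μ ∈ AddSubgroup.closure {x : F | ∃ k : ℕ, 1 ≤ k ∧ x = c k}) ∧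
      C l = (-1 : F) ^ (l.length - 1) * c (l.getLast hne) := by
  obtain ⟨hsort, hpos⟩ := hl
  have hsupp := expansion_mem_supported (c := c) hpos le_rfl
  refine ⟨fun μ => expansion c l l.sum μ, fun μ hμ hdom => ?_, ?_, fun μ _ => ?_,
    expansion_apply_self hsort hpos hne⟩
  · by_contra h
    exact hdom (dominates_of_coe_mem_dominatingSet (pairwise_of_mem_partitionsOfWeight hμ)
      (hsupp (Finsupp.mem_support_iff.2 h)))
  · have hpart := Finsupp.supported_mono (t := {ν | (∀ x ∈ ν, 0 < x) ∧ ν.sum = l.sum})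
      (fun ν hν => ⟨hν.1, by exact_mod_cast hν.2.1⟩) hsupp
    rw [Tq_eq_TqOfWeight hne, ← linearCombination_expansion hrec hq0 l le_rfl,
      linearCombination_eq_sum_partitionsOfWeight hpart]
    simp_rw [qMonomial_coe]
  · refine expansion_apply_mem (fun k hk => ?_) l _ μ
    exact AddSubgroup.subset_closure ⟨k, hk, rfl⟩

/-- **Generalized Newton identity** (Theorem 3.1).  If `Σ_{i=1}^n R_i q_{n-i} = c_n q_n`
for all `n ≥ 1`, then for every partition `λ` of length `s ≥ 1`,
`T.q_λ = Σ_{μ ⊢ |λ|, μ ≥ λ} c_{λμ} q_μ` with each `c_{λμ}` in the additive subgroup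
generated by the `c_k` (`k ≥ 1`) and `c_{λλ} = (-1)^{s-1} c_{λ_s}`. -/
theorem generalized_newton_identity
    (F A : Type*) [Field F] [CommRing A] [Algebra F A]
    (q : ℤ → A) (R : ℕ → A) (c : ℕ → F)
    (hq0 : q 0 = 1) (hqneg : ∀ n : ℤ, n < 0 → q n = 0)
    (hc0 : c 0 = 0)
    (hrec : ∀ n : ℕ, 1 ≤ n →
      ∑ i ∈ Finset.Icc 1 n, R i * q ((n : ℤ) - i) = c n • q (n : ℤ))
    (l : List ℕ) (hl : IsPartitionList l) (hne : l ≠ []) :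
    ∃ C : List ℕ → F,
      (∀ μ ∈ partitionsOfWeight l.sum, ¬ Dominates μ l → C μ = 0) ∧
      Tq R q l = ∑ μ ∈ partitionsOfWeight l.sum, C μ • qProd q μ ∧
      (∀ μ ∈ partitionsOfWeight l.sum,
        C μ ∈ AddSubgroup.closure {x : F | ∃ k : ℕ, 1 ≤ k ∧ x = c k}) ∧
      C l = (-1 : F) ^ (l.length - 1) * c (l.getLast hne) :=
  generalized_newton_identity_general F A q R c hq0 hrec l hl hne
end

section
/- Let a ≥ 1 be an integer and let (λ_1,…,λ_s,a+1) be a partition. Then T.q_{(λ_1,…,λ_s,a+1)} = T.q_{μ} + q_a·T.q_{ν} − q_{λ_s}·T.q_{(λ_1,…,λ_{s−1},a+1)}, where μ = [λ_1,…,λ_{s−1},λ_s+1,a] is the weakly decreasing rearrangement of (λ_1,…,λ_{s−1},λ_s+1,a) and ν = [λ_1,…,λ_{s−1},λ_s+1] that of (λ_1,…,λ_{s−1},λ_s+1). -/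
open Finset

/-!
Expanding `T` along its first two parts writes `T.q_{(x, y, λ)}` as
`∑_{k < x, m < y} q_k q_m G(x - k + y - m)`, where `G s` is `T.q_λ` with `R` shifted by `s`.
Since `T` is symmetric in the parts, every term of the formula can be brought to this shape with
`λ = (λ₁, …, λ_{s-1})`. The two double sums then have the common summand
`q_k q_m G(a + b + 1 - k - m)` (`b = λ_s`) over the rectangles `[0, b) × [0, a]` and
`[0, b] × [0, a)`; their difference consists of two boundary strips, which are
`q_a T.q_ν` and `q_b T.q_{(λ₁, …, λ_{s-1}, a+1)}` up to the common corner term `q_a q_b G(1)`.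
-/

theorem Finset.sum_Icc_fin_succ {α M : Type*} [DecidableEq α] [PartialOrder α]
    [LocallyFiniteOrder α] [AddCommMonoid M] {n : ℕ} (a b : Fin (n + 1) → α)
    (f : (Fin (n + 1) → α) → M) :
    ∑ x ∈ Icc a b, f x =
      ∑ x₀ ∈ Icc (a 0) (b 0), ∑ x ∈ Icc (Fin.tail a) (Fin.tail b), f (Fin.cons x₀ x) := by
  have h := filter_piFinset_eq_map_consEquiv (fun i => Icc (a i) (b i)) (fun _ => True)
  simp only [filter_true] at h
  rw [Pi.Icc_eq, h, sum_map, sum_product]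
  rfl

theorem Finset.sum_Icc_one_eq_sum_range_sub {M : Type*} [AddCommMonoid M] (n : ℕ)
    (f : ℕ → M) : ∑ i ∈ Icc 1 n, f i = ∑ k ∈ range n, f (n - k) := by
  rw [range_eq_Ico, sum_Ico_reflect f 0 le_self_add, Nat.add_sub_cancel_left, Nat.sub_zero,
    Ico_add_one_right_eq_Icc]

theorem Finset.sum_sum_range_succ_right {M : Type*} [AddCommGroup M] (H : ℕ → ℕ → M) (a b : ℕ) :
    ∑ k ∈ range b, ∑ m ∈ range (a + 1), H k m =
      ∑ k ∈ range (b + 1), ∑ m ∈ range a, H k m + ∑ k ∈ range b, H k a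
        - ∑ m ∈ range a, H b m := by
  simp only [sum_range_succ, sum_add_distrib]
  abel

theorem sum_convolution_succ_right {A : Type*} [CommRing A] (c G : ℕ → A) (a b : ℕ) :
    ∑ k ∈ range b, ∑ m ∈ range (a + 1), c k * c m * G (b - k + (a + 1 - m)) =
      ∑ k ∈ range (b + 1), ∑ m ∈ range a, c k * c m * G (b + 1 - k + (a - m))
        + c a * ∑ k ∈ range (b + 1), c k * G (b + 1 - k)
        - c b * ∑ m ∈ range (a + 1), c m * G (a + 1 - m) := by
  set H : ℕ → ℕ → A := fun k m => c k * c m * G (a + b + 1 - k - m)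
  have hL : ∑ k ∈ range b, ∑ m ∈ range (a + 1), c k * c m * G (b - k + (a + 1 - m)) =
      ∑ k ∈ range b, ∑ m ∈ range (a + 1), H k m :=
    sum_congr rfl fun k hk => sum_congr rfl fun m hm => by
      rw [mem_range] at hk hm
      simp only [H, show a + b + 1 - k - m = b - k + (a + 1 - m) by omega]
  have hM : ∑ k ∈ range (b + 1), ∑ m ∈ range a, c k * c m * G (b + 1 - k + (a - m)) =
      ∑ k ∈ range (b + 1), ∑ m ∈ range a, H k m :=
    sum_congr rfl fun k hk => sum_congr rfl fun m hm => by
      rw [mem_range] at hk hm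
      simp only [H, show a + b + 1 - k - m = b + 1 - k + (a - m) by omega]
  have hN : c a * ∑ k ∈ range (b + 1), c k * G (b + 1 - k) =
      ∑ k ∈ range b, H k a + c a * (c b * G 1) := by
    rw [sum_range_succ, mul_add, mul_sum, Nat.add_sub_cancel_left]
    congr 1
    refine sum_congr rfl fun k _ => ?_
    simp only [H, show a + b + 1 - k - a = b + 1 - k by omega]
    ring
  have hO : c b * ∑ m ∈ range (a + 1), c m * G (a + 1 - m) =
      ∑ m ∈ range a, H b m + c b * (c a * G 1) := by
    rw [sum_range_succ, mul_add, mul_sum, Nat.add_sub_cancel_left]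
    congr 1
    refine sum_congr rfl fun m _ => ?_
    simp only [H, show a + b + 1 - b - m = a + 1 - m by omega]
    ring
  rw [hL, hM, hN, hO, sum_sum_range_succ_right]
  ring

theorem sortDesc_coe_perm (l : List ℕ) : (sortDesc (l : Multiset ℕ)).Perm l :=
  Multiset.coe_eq_coe.mp (Multiset.sort_eq _ _)

section
variable {A : Type*} [CommRing A] (q : ℤ → A)

theorem Tq_cons (R : ℕ → A) (n : ℕ) (l : List ℕ) :
    Tq R q (n :: l) = ∑ i ∈ Icc 1 n, q ((n : ℤ) - i) * Tq (fun m => R (m + i)) q l := by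
  rw [Tq]
  refine (sum_Icc_fin_succ (n := l.length) 1 _ _).trans ?_
  refine sum_congr rfl fun i _ => ?_
  rw [Tq, mul_sum]
  refine sum_congr rfl fun x _ => ?_
  simp only [List.length_cons, Fin.sum_univ_succ, Fin.prod_univ_succ, Fin.cons_zero,
    Fin.cons_succ, List.get_eq_getElem, Fin.val_zero, Fin.val_succ,
    List.getElem_cons_zero, List.getElem_cons_succ]
  rw [add_comm i]
  ring

theorem Tq_cons_eq_sum_range (R : ℕ → A) (n : ℕ) (l : List ℕ) :
    Tq R q (n :: l) = ∑ k ∈ range n, q k * Tq (fun m => R (m + (n - k))) q l := by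
  rw [Tq_cons, sum_Icc_one_eq_sum_range_sub]
  refine sum_congr rfl fun k hk => ?_
  rw [Nat.cast_sub (mem_range.1 hk).le, sub_sub_cancel]

theorem Tq_cons_cons (R : ℕ → A) (x y : ℕ) (l : List ℕ) :
    Tq R q (x :: y :: l) = ∑ k ∈ range x, ∑ m ∈ range y,
      q k * q m * Tq (fun n => R (n + (x - k + (y - m)))) q l := by
  simp only [Tq_cons_eq_sum_range, mul_sum, mul_assoc, add_assoc, add_comm (y - _)]

theorem Tq_perm {l₁ l₂ : List ℕ} (h : l₁.Perm l₂) (R : ℕ → A) : Tq R q l₁ = Tq R q l₂ := by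
  induction h generalizing R with
  | nil => rfl
  | cons x _ ih => simp only [Tq_cons, ih]
  | swap x y l =>
    rw [Tq_cons_cons, Tq_cons_cons, sum_comm]
    refine sum_congr rfl fun k _ => sum_congr rfl fun m _ => ?_
    rw [mul_comm (q m), add_comm (y - m)]
  | trans _ _ ih₁ ih₂ => rw [ih₁, ih₂]

theorem Tq_cons_cons_succ (R : ℕ → A) (a b : ℕ) (l : List ℕ) :
    Tq R q (b :: (a + 1) :: l) =
      Tq R q ((b + 1) :: a :: l) + q a * Tq R q ((b + 1) :: l)
        - q b * Tq R q ((a + 1) :: l) := by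
  rw [Tq_cons_cons, Tq_cons_cons, Tq_cons_eq_sum_range, Tq_cons_eq_sum_range]
  exact sum_convolution_succ_right (fun k => q k) (fun s => Tq (fun n => R (n + s)) q l) a b

end

theorem iteration_formula_general_general
    (A : Type*) [CommRing A]
    (q : ℤ → A) (R : ℕ → A)
    (a : ℕ)
    (l : List ℕ) (hne : l ≠ []) :
    Tq R q (l ++ [a + 1]) =
      Tq R q (sortDesc (↑(l.dropLast ++ [l.getLast hne + 1, a])))
        + q (a : ℤ) * Tq R q (sortDesc (↑(l.dropLast ++ [l.getLast hne + 1])))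
        - q (l.getLast hne) * Tq R q (l.dropLast ++ [a + 1]) := by
  have front : ∀ l' : List ℕ, (l.dropLast ++ l').Perm (l' ++ l.dropLast) :=
    fun _ => List.perm_append_comm
  rw [Tq_perm q ((sortDesc_coe_perm _).trans (front _)),
    Tq_perm q ((sortDesc_coe_perm _).trans (front _)), Tq_perm q (front _)]
  conv_lhs => rw [← List.dropLast_append_getLast hne, List.append_assoc]
  rw [Tq_perm q (front _)]
  exact Tq_cons_cons_succ q R a _ _

/-- **Lemma 3.4, second iteration formula.**  For `a ≥ 1` and a partition
`(λ₁,…,λ_s,a+1)`: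
`T.q_{(λ₁,…,λ_s,a+1)} = T.q_{[λ₁,…,λ_{s-1},λ_s+1,a]} + q_a·T.q_{[λ₁,…,λ_{s-1},λ_s+1]}
 - q_{λ_s}·T.q_{(λ₁,…,λ_{s-1},a+1)}`. -/
theorem iteration_formula_general
    (F A : Type*) [Field F] [CommRing A] [Algebra F A]
    (q : ℤ → A) (R : ℕ → A)
    (hq0 : q 0 = 1) (hqneg : ∀ n : ℤ, n < 0 → q n = 0)
    (a : ℕ) (ha : 1 ≤ a)
    (l : List ℕ) (hl : IsPartitionList l) (hne : l ≠ [])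
    (hlast : a + 1 ≤ l.getLast hne) :
    Tq R q (l ++ [a + 1]) =
      Tq R q (sortDesc (↑(l.dropLast ++ [l.getLast hne + 1, a])))
        + q (a : ℤ) * Tq R q (sortDesc (↑(l.dropLast ++ [l.getLast hne + 1])))
        - q (l.getLast hne) * Tq R q (l.dropLast ++ [a + 1]) :=
  iteration_formula_general_general A q R a l hne
end

section
/- Assume c : ℕ → F satisfies c_0 = 0 and that Σ_{i=1}^n R_i q_{n−i} = c_n q_n holds in A for every n ≥ 1. Then for all integers m ≥ n ≥ 1, T.q_{(m,n)} = Σ_{i=m+1}^{m+n} (c_i − c_{m+n−i}) q_i q_{m+n−i} − c_n q_m q_n. -/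
open Finset

/-- `T.q_{(m,n)} = Σ_{i₁,i₂ ≥ 1} R_{i₁+i₂} q_{m-i₁} q_{n-i₂}`, a finite sum since `q`
vanishes on negative integers. -/
def TqTwoRow {A : Type*} [CommRing A] (R : ℕ → A) (q : ℤ → A) (m n : ℕ) : A :=
  ∑ i₁ ∈ Finset.Icc 1 m, ∑ i₂ ∈ Finset.Icc 1 n,
    R (i₁ + i₂) * (q ((m : ℤ) - i₁) * q ((n : ℤ) - i₂))

/-! Write `S_k = Σ_{i=1}^k R_i q_{k-i}`. For fixed `i₂`, the inner sum over `i₁` is the tail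
`S_{m+i₂} - Σ_{j ≤ i₂} R_j q_{m+i₂-j}` of such a convolution. Summed against `q_{n-i₂}` and
regrouped by `t = i₂ - j`, the subtracted heads become `Σ_{t=0}^n q_{m+t} S_{n-t}`. Now
`S_k = c_k q_k` turns both pieces into the quadratic expressions of the claim; the term `t = n`
vanishes because `c_0 = 0`. -/

theorem Finset.sum_Icc_one_add {M : Type*} [AddCommMonoid M] (f : ℕ → M) (a b : ℕ) :
    ∑ j ∈ Icc 1 (a + b), f j = ∑ j ∈ Icc 1 a, f j + ∑ l ∈ Icc 1 b, f (l + a) := by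
  induction b with
  | zero => simp
  | succ b ih =>
    rw [← add_assoc, sum_Icc_succ_top (by omega), sum_Icc_succ_top (by omega), ih, add_assoc,
      add_right_comm b 1 a, add_comm a b]

theorem Finset.sum_Icc_sum_Icc_eq_sum_Icc_zero_sum_Icc {M : Type*} [AddCommMonoid M]
    (g : ℕ → ℕ → M) (n : ℕ) :
    ∑ i ∈ Icc 1 n, ∑ j ∈ Icc 1 i, g j i = ∑ t ∈ Icc 0 n, ∑ j ∈ Icc 1 (n - t), g j (t + j) := by
  rw [sum_sigma', sum_sigma']
  refine sum_nbij' (fun x ↦ ⟨x.1 - x.2, x.2⟩) (fun x ↦ ⟨x.1 + x.2, x.2⟩) ?_ ?_ ?_ ?_ ?_ <;>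
    simp only [mem_sigma, mem_Icc, Sigma.forall] <;> intros <;>
    first | omega | (congr 1; omega)

theorem Finset.sum_Icc_add_left {M : Type*} [AddCommMonoid M] (f : ℕ → M) (a b c : ℕ) :
    ∑ i ∈ Icc (c + a) (c + b), f i = ∑ i ∈ Icc a b, f (c + i) := by
  rw [← map_add_left_Icc, sum_map]
  rfl

section TwoRow

variable {A : Type*} [CommRing A]

def posConv (R Q : ℕ → A) (k : ℕ) : A :=
  ∑ i ∈ Icc 1 k, R i * Q (k - i)

variable (R Q : ℕ → A)

theorem posConv_add (m i : ℕ) :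
    posConv R Q (i + m) =
      ∑ j ∈ Icc 1 i, R j * Q (i + m - j) + ∑ l ∈ Icc 1 m, R (l + i) * Q (m - l) := by
  rw [posConv, sum_Icc_one_add]
  congr 1
  refine sum_congr rfl fun l _ ↦ ?_
  congr 2
  omega

theorem sum_Icc_sum_mul_eq_sum_mul_posConv (m n : ℕ) :
    ∑ i ∈ Icc 1 n, (∑ j ∈ Icc 1 i, R j * Q (i + m - j)) * Q (n - i) =
      ∑ t ∈ Icc 0 n, Q (t + m) * posConv R Q (n - t) := by
  simp only [sum_mul, posConv, mul_sum]
  rw [sum_Icc_sum_Icc_eq_sum_Icc_zero_sum_Icc]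
  refine sum_congr rfl fun t _ ↦ sum_congr rfl fun j _ ↦ ?_
  rw [show t + j + m - j = t + m by omega, show n - (t + j) = n - t - j by omega]
  ring

theorem sum_Icc_sum_Icc_eq_of_posConv_eq (c : ℕ → A) (hconv : ∀ k, posConv R Q k = c k * Q k)
    (m n : ℕ) :
    ∑ l ∈ Icc 1 m, ∑ i ∈ Icc 1 n, R (l + i) * (Q (m - l) * Q (n - i)) =
      ∑ i ∈ Icc (m + 1) (m + n), (c i - c (m + n - i)) * (Q i * Q (m + n - i))
        - c n * (Q m * Q n) := by
  have hinner : ∀ i, ∑ l ∈ Icc 1 m, R (l + i) * Q (m - l) =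
      c (i + m) * Q (i + m) - ∑ j ∈ Icc 1 i, R j * Q (i + m - j) := fun i ↦ by
    rw [← hconv, posConv_add]; ring
  calc ∑ l ∈ Icc 1 m, ∑ i ∈ Icc 1 n, R (l + i) * (Q (m - l) * Q (n - i))
      = ∑ i ∈ Icc 1 n, (∑ l ∈ Icc 1 m, R (l + i) * Q (m - l)) * Q (n - i) := by
        rw [sum_comm]; simp only [sum_mul, mul_assoc]
    _ = ∑ i ∈ Icc 1 n, c (m + i) * (Q (m + i) * Q (n - i))
          - ∑ t ∈ Icc 0 n, c (n - t) * (Q (m + t) * Q (n - t)) := by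
        simp only [hinner, sub_mul, sum_sub_distrib, sum_Icc_sum_mul_eq_sum_mul_posConv, hconv]
        congr 1 <;> exact sum_congr rfl fun i _ ↦ by rw [add_comm i m]; ring
    _ = _ := by
        rw [sum_Icc_add_left, Icc_eq_cons_Ioc n.zero_le, sum_cons, ← Icc_add_one_left_eq_Ioc,
          zero_add]
        simp only [Nat.add_sub_add_left, sub_mul, sum_sub_distrib, Nat.sub_zero, add_zero]
        ring

theorem TqTwoRow_eq_sum_natCast (q : ℤ → A) (m n : ℕ) :
    TqTwoRow R q m n =
      ∑ l ∈ Icc 1 m, ∑ i ∈ Icc 1 n, R (l + i) * (q ↑(m - l) * q ↑(n - i)) := by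
  refine sum_congr rfl fun l hl ↦ sum_congr rfl fun i hi ↦ ?_
  rw [Nat.cast_sub (mem_Icc.1 hl).2, Nat.cast_sub (mem_Icc.1 hi).2]

end TwoRow

theorem two_row_action_general
    (F A : Type*) [Field F] [CommRing A] [Algebra F A]
    (q : ℤ → A) (R : ℕ → A) (c : ℕ → F)
    (hc0 : c 0 = 0)
    (hrec : ∀ k : ℕ, 1 ≤ k →
      ∑ i ∈ Finset.Icc 1 k, R i * q ((k : ℤ) - i) = c k • q (k : ℤ))
    (m n : ℕ) :
    TqTwoRow R q m n =
      (∑ i ∈ Finset.Icc (m + 1) (m + n),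
        (c i - c (m + n - i)) • (q (i : ℤ) * q ((m + n - i : ℕ) : ℤ)))
        - c n • (q (m : ℤ) * q (n : ℤ)) := by
  have hconv : ∀ k, posConv R (fun k : ℕ ↦ q k) k = algebraMap F A (c k) * q k := by
    intro k
    rcases k.eq_zero_or_pos with rfl | hk
    · simp [posConv, hc0]
    · rw [← Algebra.smul_def, ← hrec k hk, posConv]
      exact sum_congr rfl fun i hi ↦ by rw [Nat.cast_sub (mem_Icc.1 hi).2]
  rw [TqTwoRow_eq_sum_natCast, sum_Icc_sum_Icc_eq_of_posConv_eq R _ _ hconv]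
  simp only [Algebra.smul_def, map_sub]

/-- **Lemma 3.9 (two-row action).**  If `Σ_{i=1}^k R_i q_{k-i} = c_k q_k` for all
`k ≥ 1` and `c_0 = 0`, then for `m ≥ n ≥ 1`,
`T.q_{(m,n)} = Σ_{i=m+1}^{m+n} (c_i - c_{m+n-i}) q_i q_{m+n-i} - c_n q_m q_n`. -/
theorem two_row_action
    (F A : Type*) [Field F] [CommRing A] [Algebra F A]
    (q : ℤ → A) (R : ℕ → A) (c : ℕ → F)
    (hq0 : q 0 = 1) (hqneg : ∀ k : ℤ, k < 0 → q k = 0)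
    (hc0 : c 0 = 0)
    (hrec : ∀ k : ℕ, 1 ≤ k →
      ∑ i ∈ Finset.Icc 1 k, R i * q ((k : ℤ) - i) = c k • q (k : ℤ))
    (m n : ℕ) (hmn : n ≤ m) (hn : 1 ≤ n) :
    TqTwoRow R q m n =
      (∑ i ∈ Finset.Icc (m + 1) (m + n),
        (c i - c (m + n - i)) • (q (i : ℤ) * q ((m + n - i : ℕ) : ℤ)))
        - c n • (q (m : ℤ) * q (n : ℤ)) :=
  two_row_action_general F A q R c hc0 hrec m n
end

section
/- Let c be a finitely supported F-valued function on pairs (μ,ν) of partitions (the empty partition allowed) with |μ| = |ν|. If Σ_{(μ,ν)} c_{μν} h_{−μ} h_ν v = 0 for every v ∈ Λ, then c_{μν} = 0 for every pair (μ,ν). -/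
open Finset MvPolynomial

/-- The power sum `p_n`, the `n`-th variable of `Λ = F[p₁,p₂,…]`. -/
noncomputable def pv (F : Type*) [Field F] (n : ℕ) : MvPolynomial ℕ+ F :=
  if h : 0 < n then X ⟨n, h⟩ else 1

/-- `p_μ = p_{μ₁} ⋯ p_{μ_s}`. -/
noncomputable def pMul (F : Type*) [Field F] (m : Multiset ℕ) : MvPolynomial ℕ+ F :=
  (m.map (pv F)).prod

/-- `z_λ = Π_i i^{m_i}·m_i!`. -/
def zMult (m : Multiset ℕ) : ℕ :=
  m.toFinset.prod fun i => i ^ m.count i * (m.count i).factorial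

/-- The generalized complete symmetric function: `q^ε_n = Σ_{λ ⊢ n} z_λ⁻¹ ε_λ⁻¹ p_λ`
for `n ≥ 0` (giving `q^ε_0 = 1`) and `q^ε_n = 0` for `n < 0`. -/
noncomputable def qeps {F : Type*} [Field F] (ε : ℕ → F) (n : ℤ) : MvPolynomial ℕ+ F :=
  if n < 0 then 0 else
    ∑ μ : Nat.Partition n.toNat,
      ((zMult μ.parts : F) * (μ.parts.map ε).prod)⁻¹ • pMul F μ.parts

/-- The weight `Π_i i^{d_i} (d_i)! ε_i^{d_i}` of a monomial, i.e. `z_λ ε_λ` for the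
partition `λ` with multiplicities `d`. -/
noncomputable def wform {F : Type*} [Field F] (ε : ℕ → F) (d : ℕ+ →₀ ℕ) : F :=
  d.prod fun i k => ((i : ℕ) : F) ^ k * (Nat.factorial k : F) * ε (i : ℕ) ^ k

/-- The bilinear form on `Λ` determined by `⟨p_λ, p_μ⟩ = δ_{λμ} z_λ ε_λ`. -/
noncomputable def bform {F : Type*} [Field F] (ε : ℕ → F) (f g : MvPolynomial ℕ+ F) : F :=
  ∑ d ∈ f.support, MvPolynomial.coeff d f * MvPolynomial.coeff d g * wform ε d

/-- The annihilation operator `h_n = n ε_n ∂/∂p_n` (`n ≥ 1`). -/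
noncomputable def hpos {F : Type*} [Field F] (ε : ℕ → F) (n : ℕ) :
    Module.End F (MvPolynomial ℕ+ F) :=
  if h : 0 < n then ((n : F) * ε n) • (pderiv (⟨n, h⟩ : ℕ+)).toLinearMap else 1

/-- `h_ν = h_{ν₁} ⋯ h_{ν_s}` (the `h_n`, `n ≥ 1`, commute with each other, so any
ordering gives the same operator). -/
noncomputable def hMul {F : Type*} [Field F] (ε : ℕ → F) (m : Multiset ℕ) :
    Module.End F (MvPolynomial ℕ+ F) :=
  ((Multiset.sort m (· ≥ ·)).map (hpos ε)).prod

/-- The maximal weight `Σ_i i·d_i` of a monomial occurring in `f`. -/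
def wdeg {F : Type*} [Field F] (f : MvPolynomial ℕ+ F) : ℕ :=
  f.support.sup fun d => d.sum fun i k => (i : ℕ) * k

/-- The operator `X₀ = Σ_{(μ,ν) : |μ|=|ν|} z_μ⁻¹ η_μ z_ν⁻¹ τ_ν h_{-μ} h_ν`; every
term with `|ν| > wdeg f` annihilates `f`, so the sum may be truncated there. -/
noncomputable def X0op {F : Type*} [Field F] (ε η τ : ℕ → F) (f : MvPolynomial ℕ+ F) :
    MvPolynomial ℕ+ F :=
  ∑ N ∈ Finset.range (wdeg f + 1), ∑ μ : Nat.Partition N, ∑ ν : Nat.Partition N,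
    ((zMult μ.parts : F)⁻¹ * (μ.parts.map η).prod *
      (zMult ν.parts : F)⁻¹ * (ν.parts.map τ).prod) •
        (pMul F μ.parts * hMul ε ν.parts f)

/-- `R_0 = 1` and `R_n = Σ_{λ ⊢ n} z_λ⁻¹ η_λ p_λ` for `n ≥ 1`. -/
noncomputable def Rgen {F : Type*} [Field F] (η : ℕ → F) (n : ℕ) : MvPolynomial ℕ+ F :=
  ∑ μ : Nat.Partition n, ((zMult μ.parts : F)⁻¹ * (μ.parts.map η).prod) • pMul F μ.parts

/-- The eigenvalue `e_λ = 1 + (1-a) Σ_{i=1}^{l(λ)} (b^{λ_i}-1) a^{i-1}`. -/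
def eigval {F : Type*} [Field F] (a b : F) (l : List ℕ) : F :=
  1 + (1 - a) * ∑ i : Fin l.length, (b ^ (l.get i) - 1) * a ^ (i : ℕ)

/-!
Test the operator on `v = p_ν` and read off the coefficient of `p_μ`, where `(μ, ν)` lies in the
support of `c` with `|ν|` minimal. In the monomial basis `h_{ν'}` lowers the exponents by those
of `ν'`, so `h_{ν'} p_ν = 0` unless `ν' ⊆ ν`; as `|ν'| ≥ |ν|` this forces `ν' = ν`, and then
`h_ν p_ν` is a nonzero constant because `F` has characteristic `0` and the `ε_n` are nonzero.
So `(μ, ν)` is the only term contributing to that coefficient, and `c_{μν} = 0`.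
-/

theorem single_one_add_le_iff {σ : Type*} (i : σ) (e d : σ →₀ ℕ) :
    Finsupp.single i 1 + e ≤ d ↔ e ≤ d ∧ e i < d i := by
  classical
  simp only [Finsupp.le_def, Finsupp.add_apply, Finsupp.single_apply]
  refine ⟨fun h => ⟨fun j => le_trans le_add_self (h j),
    by simpa [Nat.one_add_le_iff] using h i⟩, fun ⟨he, hi⟩ j => ?_⟩
  split_ifs with hij
  · subst hij; omega
  · simpa using he j

theorem Nat.Partition.parts_eq_of_parts_le {N M : ℕ} (μ : N.Partition) (ν : M.Partition)
    (h : μ.parts ≤ ν.parts) (hMN : M ≤ N) : μ.parts = ν.parts := by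
  obtain ⟨r, hr⟩ := Multiset.le_iff_exists_add.1 h
  have hsum : r.sum = 0 := by
    have := congrArg Multiset.sum hr
    rw [Multiset.sum_add, μ.parts_sum, ν.parts_sum] at this
    omega
  have hr0 : r = 0 := Multiset.eq_zero_of_forall_notMem fun n hn =>
    (ν.parts_pos (hr ▸ Multiset.mem_add.2 (Or.inr hn))).ne'
      (Multiset.sum_eq_zero_iff.1 hsum n hn)
  rw [hr, hr0, add_zero]

theorem partitionPair_eq_iff (x y : Σ N : ℕ, N.Partition × N.Partition) :
    x = y ↔ x.2.1.parts = y.2.1.parts ∧ x.2.2.parts = y.2.2.parts := by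
  refine ⟨fun h => h ▸ ⟨rfl, rfl⟩, fun ⟨hμ, hν⟩ => ?_⟩
  obtain ⟨N, μ, ν⟩ := x
  obtain ⟨M, μ', ν'⟩ := y
  obtain rfl : N = M := by rw [← μ.parts_sum, ← μ'.parts_sum, hμ]
  obtain rfl : μ = μ' := Nat.Partition.ext hμ
  obtain rfl : ν = ν' := Nat.Partition.ext hν
  rfl

/-- The exponent vector of the monomial `p_m`; only meaningful when all elements of `m` are
positive, since `Nat.toPNat'` sends `0` to `1`. -/
noncomputable def pExponent (m : Multiset ℕ) : ℕ+ →₀ ℕ :=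
  (m.map Nat.toPNat').toFinsupp

theorem pExponent_cons (n : ℕ) (m : Multiset ℕ) :
    pExponent (n ::ₘ m) = Finsupp.single n.toPNat' 1 + pExponent m := by
  rw [pExponent, Multiset.map_cons, ← Multiset.singleton_add, Multiset.toFinsupp_add,
    Multiset.toFinsupp_singleton, pExponent]

theorem map_coe_map_toPNat' {m : Multiset ℕ} (hm : ∀ n ∈ m, 0 < n) :
    (m.map Nat.toPNat').map ((↑) : ℕ+ → ℕ) = m := by
  rw [Multiset.map_map]
  exact (Multiset.map_congr rfl fun n hn => PNat.toPNat'_coe (hm n hn)).trans m.map_id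

theorem pExponent_le_pExponent_iff {m m' : Multiset ℕ} (hm : ∀ n ∈ m, 0 < n)
    (hm' : ∀ n ∈ m', 0 < n) : pExponent m ≤ pExponent m' ↔ m ≤ m' := by
  rw [pExponent, pExponent, ← Finsupp.coe_orderIsoMultiset_symm,
    OrderIso.le_iff_le]
  refine ⟨fun h => ?_, Multiset.map_le_map⟩
  rw [← map_coe_map_toPNat' hm, ← map_coe_map_toPNat' hm']
  exact Multiset.map_le_map h

theorem eq_of_pExponent_eq {m m' : Multiset ℕ} (hm : ∀ n ∈ m, 0 < n) (hm' : ∀ n ∈ m', 0 < n)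
    (h : pExponent m = pExponent m') : m = m' :=
  le_antisymm ((pExponent_le_pExponent_iff hm hm').1 h.le)
    ((pExponent_le_pExponent_iff hm' hm).1 h.ge)

theorem pMul_eq_monomial (F : Type*) [Field F] {m : Multiset ℕ} (hm : ∀ n ∈ m, 0 < n) :
    pMul F m = monomial (pExponent m) 1 := by
  induction m using Multiset.induction with
  | empty => simp [pMul, pExponent]
  | cons n m ih =>
    have hn : 0 < n := hm n (Multiset.mem_cons_self n m)
    have hn' : (⟨n, hn⟩ : ℕ+) = n.toPNat' := PNat.eq (PNat.toPNat'_coe hn).symm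
    rw [pMul, Multiset.map_cons, Multiset.prod_cons, ← pMul,
      ih fun k hk => hm k (Multiset.mem_cons_of_mem hk), pExponent_cons, pv, dif_pos hn, hn',
      X, monomial_mul, one_mul]

section Annihilation

variable {F : Type*} [Field F] (ε : ℕ → F)

theorem hpos_monomial {n : ℕ} (hn : 0 < n) (d : ℕ+ →₀ ℕ) (a : F) :
    hpos ε n (monomial d a) =
      monomial (d - Finsupp.single n.toPNat' 1) ((n : F) * ε n * d n.toPNat' * a) := by
  have hn' : (⟨n, hn⟩ : ℕ+) = n.toPNat' := PNat.eq (PNat.toPNat'_coe hn).symm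
  rw [hpos, dif_pos hn]
  change ((n : F) * ε n) • pderiv ⟨n, hn⟩ (monomial d a) = _
  rw [hn', pderiv_monomial, smul_monomial, smul_eq_mul]
  congr 1
  ring

variable [CharZero F] {ε} (hε : ∀ k : ℕ, 1 ≤ k → ε k ≠ 0)
include hε

theorem prod_map_hpos_monomial {l : List ℕ} (hl : ∀ n ∈ l, 0 < n) (d : ℕ+ →₀ ℕ) :
    ∃ s : F, (s ≠ 0 ↔ pExponent ↑l ≤ d) ∧
      ∀ a : F, (l.map (hpos ε)).prod (monomial d a) = monomial (d - pExponent ↑l) (s * a) := by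
  induction l with
  | nil => exact ⟨1, by simp [pExponent], by simp [pExponent]⟩
  | cons n l ih =>
    have hn : 0 < n := hl n List.mem_cons_self
    obtain ⟨s, hs, happ⟩ := ih fun k hk => hl k (List.mem_cons_of_mem n hk)
    have hnε : (n : F) * ε n ≠ 0 := mul_ne_zero (Nat.cast_ne_zero.2 hn.ne') (hε n hn)
    refine ⟨(n : F) * ε n * (d - pExponent ↑l) n.toPNat' * s, ?_, fun a => ?_⟩
    · rw [← Multiset.cons_coe, pExponent_cons, single_one_add_le_iff, ← hs,
        Finsupp.tsub_apply, mul_ne_zero_iff, mul_ne_zero_iff, Nat.cast_ne_zero,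
        Nat.sub_ne_zero_iff_lt]
      tauto
    · rw [List.map_cons, List.prod_cons, Module.End.mul_apply, happ, hpos_monomial ε hn,
        ← Multiset.cons_coe, pExponent_cons, tsub_tsub, add_comm (pExponent ↑l)]
      congr 1
      ring

theorem hMul_monomial {m : Multiset ℕ} (hm : ∀ n ∈ m, 0 < n) (d : ℕ+ →₀ ℕ) :
    ∃ s : F, (s ≠ 0 ↔ pExponent m ≤ d) ∧
      ∀ a : F, hMul ε m (monomial d a) = monomial (d - pExponent m) (s * a) := by
  have hsort := Multiset.sort_eq m (· ≥ ·)
  have := prod_map_hpos_monomial hε (l := m.sort (· ≥ ·))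
    (fun n hn => hm n ((Multiset.mem_sort _).1 hn)) d
  rwa [hsort] at this

end Annihilation

theorem coeff_pMul_mul_hMul_pMul_ne_zero_iff {F : Type*} [Field F] [CharZero F] {ε : ℕ → F}
    (hε : ∀ k : ℕ, 1 ≤ k → ε k ≠ 0) (x y : Σ N : ℕ, N.Partition × N.Partition)
    (hxy : y.1 ≤ x.1) :
    coeff (pExponent y.2.1.parts)
        (pMul F x.2.1.parts * hMul ε x.2.2.parts (pMul F y.2.2.parts)) ≠ 0 ↔ x = y := by
  obtain ⟨N, μ, ν⟩ := x
  obtain ⟨M, μ', ν'⟩ := y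
  obtain ⟨s, hs, happ⟩ := hMul_monomial hε (fun n hn => ν.parts_pos hn) (pExponent ν'.parts)
  have hν : pExponent ν.parts ≤ pExponent ν'.parts ↔ ν.parts = ν'.parts := by
    rw [pExponent_le_pExponent_iff (fun n hn => ν.parts_pos hn) (fun n hn => ν'.parts_pos hn)]
    exact ⟨fun h => ν.parts_eq_of_parts_le ν' h hxy, fun h => h.le⟩
  rw [pMul_eq_monomial F (fun n hn => μ.parts_pos hn),
    pMul_eq_monomial F (fun n hn => ν'.parts_pos hn), happ, monomial_mul, one_mul,
    coeff_monomial, partitionPair_eq_iff]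
  dsimp only
  split_ifs with heq
  · rw [mul_one, hs, hν]
    refine ⟨fun h => ⟨eq_of_pExponent_eq (fun n hn => μ.parts_pos hn)
      (fun n hn => μ'.parts_pos hn) ?_, h⟩, fun h => h.2⟩
    rwa [h, tsub_self, add_zero] at heq
  · simp only [ne_eq, not_true_eq_false, false_iff, not_and]
    intro hμ hν'
    apply heq
    rw [hμ, hν', tsub_self, add_zero]

/-- **Lemma 4.1** : if a finitely supported combination
`Σ_{(μ,ν) : |μ|=|ν|} c_{μν} h_{-μ} h_ν` annihilates every `v ∈ Λ`, then all `c_{μν} = 0`. -/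
theorem operator_combination_zero
    (F : Type*) [Field F] [CharZero F] (ε : ℕ → F) (hε : ∀ k : ℕ, 1 ≤ k → ε k ≠ 0)
    (c : ((N : ℕ) × (Nat.Partition N × Nat.Partition N)) →₀ F)
    (h : ∀ v : MvPolynomial ℕ+ F,
      ∑ x ∈ c.support, c x • (pMul F x.2.1.parts * hMul ε x.2.2.parts v) = 0) :
    c = 0 := by
  by_contra hc
  obtain ⟨y, hy, hmin⟩ :=
    c.support.exists_min_image Sigma.fst (Finsupp.support_nonempty_iff.2 hc)
  have hcoeff := congrArg (coeff (pExponent y.2.1.parts)) (h (pMul F y.2.2.parts))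
  rw [coeff_sum, Finset.sum_eq_single_of_mem y hy, coeff_zero, coeff_smul, smul_eq_mul]
    at hcoeff
  · exact mul_ne_zero (Finsupp.mem_support_iff.1 hy)
      ((coeff_pMul_mul_hMul_pMul_ne_zero_iff hε y y le_rfl).2 rfl) hcoeff
  · intro x hx hxy
    have hzero := mt (coeff_pMul_mul_hMul_pMul_ne_zero_iff hε x y (hmin x hx)).1 hxy
    rw [coeff_smul, not_ne_iff.1 hzero, smul_zero]
end

section
/- Let b ∈ F and set η_n = ε_n^{−1}(b^n − 1) for n ≥ 1. Define R_0 = 1 and R_n = Σ_{λ ⊢ n} z_λ^{−1} η_λ p_λ for n ≥ 1 (equivalently Σ_n R_n z^n = exp(Σ_{n≥1} η_n p_n z^n/n)). Then for every n ≥ 1, Σ_{i=1}^n R_i q^ε_{n−i} = (b^n − 1) q^ε_n in Λ. -/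
open Finset MvPolynomial

/-!
Write `Rgen g n = Σ_{λ ⊢ n} z_λ⁻¹ g_λ p_λ` for an arbitrary `g`. Its coefficient at the monomial
`p^d` of weight `n` is `Π_i (g_i / i)^{d_i} / d_i!`, so `Σ_n Rgen g n` behaves like
`exp (Σ_i g_i p_i / i)` and `Σ_{i+j=n} Rgen x i * Rgen y j = Rgen (x + y) n`. As `R = Rgen η`,
`q^ε = Rgen ε⁻¹` and `η_k + ε_k⁻¹ = b^k ε_k⁻¹`, the full convolution `Σ_{i=0}^n R_i q^ε_{n-i}`
equals `Rgen (b^k ε_k⁻¹) n = b^n q^ε_n`; removing its term `R_0 q^ε_n = q^ε_n` gives the claim.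
-/

theorem Multiset.prod_map_pow_eq_pow_sum {M : Type*} [CommMonoid M] (b : M) (m : Multiset ℕ) :
    (m.map (b ^ ·)).prod = b ^ m.sum := by
  induction m using Multiset.induction_on with
  | empty => simp
  | cons a m ih => simp [ih, pow_add]

theorem sum_antidiagonal_pow_div_factorial_mul {F : Type*} [Field F] [CharZero F] (u v : F)
    (k : ℕ) :
    ∑ p ∈ antidiagonal k, u ^ p.1 / p.1.factorial * (v ^ p.2 / p.2.factorial) =
      (u + v) ^ k / k.factorial := by
  have := congrArg (PowerSeries.coeff k) (PowerSeries.exp_mul_exp_eq_exp_add u v)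
  simpa [PowerSeries.coeff_mul, PowerSeries.coeff_rescale, PowerSeries.coeff_exp, div_eq_mul_inv,
    mul_assoc, mul_comm, mul_left_comm] using this

namespace Finsupp

variable {α : Type*} [DecidableEq α]

theorem sum_antidiagonal_single_add {M : Type*} [AddCommMonoid M] {a : α} {g : α →₀ ℕ}
    (ha : g a = 0) (k : ℕ) (f : (α →₀ ℕ) × (α →₀ ℕ) → M) :
    ∑ p ∈ antidiagonal (single a k + g), f p =
      ∑ u ∈ antidiagonal k, ∑ v ∈ antidiagonal g, f (single a u.1 + v.1, single a u.2 + v.2) := by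
  rw [← sum_product']
  refine (sum_nbij' (fun q : (ℕ × ℕ) × (α →₀ ℕ) × (α →₀ ℕ) =>
      (single a q.1.1 + q.2.1, single a q.1.2 + q.2.2))
    (fun p : (α →₀ ℕ) × (α →₀ ℕ) => ((p.1 a, p.2 a), (p.1.erase a, p.2.erase a)))
    ?_ ?_ ?_ ?_ ?_).symm
  · rintro ⟨⟨k₁, k₂⟩, ⟨e₁, e₂⟩⟩ hq
    simp only [mem_product, HasAntidiagonal.mem_antidiagonal] at hq ⊢
    rw [← hq.1, ← hq.2, single_add, add_add_add_comm]
  · rintro ⟨p₁, p₂⟩ hp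
    simp only [mem_product, HasAntidiagonal.mem_antidiagonal] at hp ⊢
    refine ⟨by simpa [ha] using DFunLike.congr_fun hp a, ?_⟩
    rw [← erase_add, hp, erase_add, erase_single, zero_add, erase_of_notMem_support
      (notMem_support_iff.mpr ha)]
  · rintro ⟨⟨k₁, k₂⟩, ⟨e₁, e₂⟩⟩ hq
    simp only [mem_product, HasAntidiagonal.mem_antidiagonal] at hq
    have he : e₁ a = 0 ∧ e₂ a = 0 := by
      simpa [ha] using DFunLike.congr_fun hq.2 a
    simp [he.1, he.2, erase_add, erase_of_notMem_support]
  · rintro ⟨p₁, p₂⟩ -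
    simp [single_add_erase]
  · intro q _
    rfl

theorem sum_antidiagonal_prod_mul_prod {M : Type*} [CommSemiring M] (φ ψ χ : α → ℕ → M)
    (hφ : ∀ i, φ i 0 = 1) (hψ : ∀ i, ψ i 0 = 1)
    (hχ : ∀ i k, ∑ p ∈ antidiagonal k, φ i p.1 * ψ i p.2 = χ i k) (d : α →₀ ℕ) :
    ∑ p ∈ antidiagonal d, p.1.prod φ * p.2.prod ψ = d.prod χ := by
  have prod_single_add : ∀ (θ : α → ℕ → M), (∀ i, θ i 0 = 1) → ∀ a k (g : α →₀ ℕ), g a = 0 →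
      (single a k + g).prod θ = θ a k * g.prod θ := by
    intro θ hθ a k g hg
    rw [prod_add_index_of_disjoint, prod_single_index (hθ a)]
    exact disjoint_left.mpr fun b hb hbg => by
      rw [mem_support_single] at hb
      exact mem_support_iff.mp hbg (hb.1 ▸ hg)
  induction d using Finsupp.induction with
  | zero => simp
  | single_add a k g ha _ ih =>
    have hga : g a = 0 := notMem_support_iff.mp ha
    have hχ0 (i : α) : χ i 0 = 1 := by simpa [hφ, hψ] using (hχ i 0).symm
    rw [sum_antidiagonal_single_add hga, prod_single_add χ hχ0 a k g hga, ← hχ, ← ih, sum_mul_sum]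
    refine Finset.sum_congr rfl fun u _ => Finset.sum_congr rfl fun v hv => ?_
    have hv0 : v.1 a = 0 ∧ v.2 a = 0 := by
      simpa [hga] using DFunLike.congr_fun (HasAntidiagonal.mem_antidiagonal.mp hv) a
    rw [prod_single_add φ hφ a _ _ hv0.1, prod_single_add ψ hψ a _ _ hv0.2]
    ring

end Finsupp

namespace PowerSum

noncomputable def toParts (d : ℕ+ →₀ ℕ) : Multiset ℕ :=
  d.toMultiset.map (↑)

theorem toParts_injective : Function.Injective toParts :=
  (Multiset.map_injective PNat.coe_injective).comp
    (Function.LeftInverse.injective (g := Multiset.toFinsupp) Finsupp.toMultiset_toFinsupp)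

theorem exists_toParts_eq {m : Multiset ℕ} (hm : ∀ a ∈ m, 0 < a) : ∃ d, toParts d = m := by
  lift m to Multiset ℕ+ using hm
  exact ⟨Multiset.toFinsupp m, by rw [toParts, Multiset.toFinsupp_toMultiset]⟩

theorem pos_of_mem_toParts {d : ℕ+ →₀ ℕ} {a : ℕ} (ha : a ∈ toParts d) : 0 < a := by
  obtain ⟨i, -, rfl⟩ := Multiset.mem_map.mp ha
  exact i.pos

theorem prod_map_toParts {M : Type*} [CommMonoid M] (f : ℕ → M) (d : ℕ+ →₀ ℕ) :
    ((toParts d).map f).prod = d.prod fun i k => f i ^ k := by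
  rw [toParts, Multiset.map_map, Finset.prod_multiset_map_count, Finsupp.toFinset_toMultiset]
  simp [Finsupp.prod]

theorem sum_toParts (d : ℕ+ →₀ ℕ) : (toParts d).sum = Finsupp.weight PNat.val d := by
  rw [toParts, Finset.sum_multiset_map_count, Finsupp.toFinset_toMultiset,
    Finsupp.weight_apply]
  simp [Finsupp.sum]

theorem zMult_toParts (d : ℕ+ →₀ ℕ) :
    zMult (toParts d) = d.prod fun i k => (i : ℕ) ^ k * k.factorial := by
  rw [zMult, toParts, Multiset.toFinset_map, Finsupp.toFinset_toMultiset,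
    Finset.prod_image PNat.coe_injective.injOn]
  simp [Finsupp.prod, Multiset.count_map_eq_count' _ _ PNat.coe_injective]

theorem pMul_toParts (F : Type*) [Field F] (d : ℕ+ →₀ ℕ) : pMul F (toParts d) = monomial d 1 := by
  rw [pMul, prod_map_toParts, monomial_eq, C_1, one_mul]
  simp only [pv, PNat.pos, dif_pos]
  rfl

variable {F : Type*} [Field F]

noncomputable def expCoeff (g : ℕ → F) (d : ℕ+ →₀ ℕ) : F :=
  d.prod fun i k => (g i / i) ^ k / k.factorial

theorem zMult_inv_mul_prod_toParts (g : ℕ → F) (d : ℕ+ →₀ ℕ) :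
    (zMult (toParts d) : F)⁻¹ * ((toParts d).map g).prod = expCoeff g d := by
  rw [zMult_toParts, prod_map_toParts, expCoeff, Nat.cast_finsuppProd, Finsupp.prod,
    Finsupp.prod, Finsupp.prod, ← prod_inv_distrib, ← prod_mul_distrib]
  refine prod_congr rfl fun i _ => ?_
  push_cast
  rw [div_pow]
  ring

theorem coeff_Rgen (g : ℕ → F) (n : ℕ) (d : ℕ+ →₀ ℕ) :
    coeff d (Rgen g n) = if Finsupp.weight PNat.val d = n then expCoeff g d else 0 := by
  have coeff_pMul (μ : n.Partition) :
      coeff d (pMul F μ.parts) = if μ.parts = toParts d then 1 else 0 := by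
    obtain ⟨e, he⟩ := exists_toParts_eq fun a ha => μ.parts_pos ha
    rw [← he, pMul_toParts, coeff_monomial]
    simp only [toParts_injective.eq_iff]
  simp only [Rgen, coeff_sum, coeff_smul, coeff_pMul, smul_eq_mul, mul_ite, mul_one, mul_zero]
  split_ifs with hd
  · let μ₀ : n.Partition := ⟨toParts d, pos_of_mem_toParts, by rw [sum_toParts, hd]⟩
    simp_rw [show ∀ μ : n.Partition, μ.parts = toParts d ↔ μ = μ₀ from
      fun μ => (Nat.Partition.ext_iff (x := μ) (y := μ₀)).symm]
    rw [sum_ite_eq', if_pos (mem_univ _), zMult_inv_mul_prod_toParts]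
  · refine sum_eq_zero fun μ _ => if_neg fun hμ => hd ?_
    rw [← sum_toParts, ← hμ, μ.parts_sum]

theorem sum_antidiagonal_expCoeff_mul [CharZero F] (x y : ℕ → F) (d : ℕ+ →₀ ℕ) :
    ∑ p ∈ antidiagonal d, expCoeff x p.1 * expCoeff y p.2 = expCoeff (x + y) d := by
  refine Finsupp.sum_antidiagonal_prod_mul_prod _ _ _ (by simp) (by simp) (fun i k => ?_) d
  rw [sum_antidiagonal_pow_div_factorial_mul, Pi.add_apply, add_div]

theorem sum_antidiagonal_Rgen_mul [CharZero F] (x y : ℕ → F) (n : ℕ) :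
    ∑ p ∈ antidiagonal n, Rgen x p.1 * Rgen y p.2 = Rgen (x + y) n := by
  ext d
  simp only [coeff_sum, coeff_mul, coeff_Rgen, ite_zero_mul_ite_zero]
  rw [sum_comm]
  have weight_eq (q : (ℕ+ →₀ ℕ) × (ℕ+ →₀ ℕ)) (hq : q ∈ antidiagonal d) :
      Finsupp.weight PNat.val q.1 + Finsupp.weight PNat.val q.2 = Finsupp.weight PNat.val d := by
    rw [← map_add, HasAntidiagonal.mem_antidiagonal.mp hq]
  have inner (q : (ℕ+ →₀ ℕ) × (ℕ+ →₀ ℕ)) (hq : q ∈ antidiagonal d) :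
      ∑ p ∈ antidiagonal n, (if Finsupp.weight PNat.val q.1 = p.1 ∧
        Finsupp.weight PNat.val q.2 = p.2 then expCoeff x q.1 * expCoeff y q.2 else 0) =
      if Finsupp.weight PNat.val d = n then expCoeff x q.1 * expCoeff y q.2 else 0 := by
    simp_rw [← Prod.ext_iff (x := (_, _)), sum_ite_eq, HasAntidiagonal.mem_antidiagonal,
      weight_eq q hq]
  rw [sum_congr rfl inner, sum_ite_irrel, sum_const_zero, sum_antidiagonal_expCoeff_mul]

theorem Rgen_congr {g g' : ℕ → F} (h : ∀ k, 0 < k → g k = g' k) (n : ℕ) : Rgen g n = Rgen g' n :=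
  sum_congr rfl fun μ _ => by
    rw [Multiset.map_congr rfl fun k hk => h k (μ.parts_pos hk)]

theorem Rgen_pow_mul (b : F) (g : ℕ → F) (n : ℕ) :
    Rgen (fun k => b ^ k * g k) n = b ^ n • Rgen g n := by
  simp only [Rgen, smul_sum, smul_smul, Multiset.prod_map_mul, Multiset.prod_map_pow_eq_pow_sum,
    Nat.Partition.parts_sum]
  exact sum_congr rfl fun μ _ => by ring_nf

theorem Rgen_zero (g : ℕ → F) : Rgen g 0 = 1 := by
  simp [Rgen, Nat.Partition.partition_zero_parts, zMult, pMul]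

theorem qeps_natCast (ε : ℕ → F) (n : ℕ) : qeps ε n = Rgen (fun k => (ε k)⁻¹) n := by
  simp only [qeps, Nat.cast_nonneg, not_lt.mpr, if_false, Int.toNat_natCast, Rgen, mul_inv,
    Multiset.prod_map_inv]

end PowerSum

open PowerSum

theorem creating_part_general
    (F : Type*) [Field F] [CharZero F] (ε η : ℕ → F)
    (b : F) (hη : ∀ k : ℕ, 1 ≤ k → η k = (ε k)⁻¹ * (b ^ k - 1))
    (n : ℕ) :
    ∑ i ∈ Finset.Icc 1 n, Rgen η i * qeps ε ((n : ℤ) - i) =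
      (b ^ n - 1) • qeps ε (n : ℤ) := by
  set ε' : ℕ → F := fun k => (ε k)⁻¹
  calc ∑ i ∈ Icc 1 n, Rgen η i * qeps ε ((n : ℤ) - i)
      = ∑ i ∈ Icc 0 n, Rgen η i * Rgen ε' (n - i) - Rgen ε' n := by
        rw [← sum_Ioc_add_eq_sum_Icc (Nat.zero_le n), Rgen_zero, one_mul, Nat.sub_zero,
          add_sub_cancel_right]
        exact sum_congr rfl fun i hi => by rw [← Nat.cast_sub (mem_Ioc.mp hi).2, qeps_natCast]
    _ = ∑ p ∈ antidiagonal n, Rgen η p.1 * Rgen ε' p.2 - qeps ε n := by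
        rw [Nat.sum_antidiagonal_eq_sum_range_succ (fun i j => Rgen η i * Rgen ε' j),
          Nat.range_succ_eq_Icc_zero, qeps_natCast]
    _ = Rgen (fun k => b ^ k * ε' k) n - qeps ε n := by
        rw [sum_antidiagonal_Rgen_mul]
        congr 1
        exact Rgen_congr (fun k hk => by simp only [Pi.add_apply, hη k hk, ε']; ring) n
    _ = (b ^ n - 1) • qeps ε n := by
        rw [Rgen_pow_mul, qeps_natCast, sub_smul, one_smul]

/-- **Lemma 4.3** : if `η_n = ε_n⁻¹(b^n - 1)` then with `R_0 = 1`,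
`R_n = Σ_{λ ⊢ n} z_λ⁻¹ η_λ p_λ`, one has `Σ_{i=1}^n R_i q^ε_{n-i} = (b^n - 1) q^ε_n`
for every `n ≥ 1`. -/
theorem creating_part
    (F : Type*) [Field F] [CharZero F] (ε η : ℕ → F)
    (hε : ∀ k : ℕ, 1 ≤ k → ε k ≠ 0)
    (b : F) (hη : ∀ k : ℕ, 1 ≤ k → η k = (ε k)⁻¹ * (b ^ k - 1))
    (n : ℕ) (hn : 1 ≤ n) :
    ∑ i ∈ Finset.Icc 1 n, Rgen η i * qeps ε ((n : ℤ) - i) =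
      (b ^ n - 1) • qeps ε (n : ℤ) :=
  creating_part_general F ε η b hη n
end

section
/- Let F be a field, a, b ∈ F, and let m ≥ n ≥ 1 be integers. Assume b^i ≠ 1 for 1 ≤ i ≤ n and b^{m−n+i} ≠ a for 1 ≤ i ≤ n. Define g_0 = 1 and, recursively for 1 ≤ i ≤ n, g_i = [(1−a)(b^{m−n+2i}−1)/((1−b^i)(b^{m−n+i}−a))] · Σ_{j=0}^{i−1} g_j. Then for every 1 ≤ i ≤ n, g_i = [Π_{k=0}^{i−1}(1−a b^k) / Π_{k=1}^{i}(1−b^k)] · [Π_{k=1}^{i−1}(b^{m−n+k}−1) / Π_{k=1}^{i}(b^{m−n+k}−a)] · (b^{m−n+2i}−1). -/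
/-!
Writing `t i` for the coefficient of `∑_{j<i} g_j` in the recursion, the partial sums satisfy
`∑_{j≤i} g_j = (1 + t i) ∑_{j<i} g_j`, hence `∑_{j≤i} g_j = ∏_{k=1}^{i} (1 + t k)`. The point is
that `1 + t k` factors: with `x = b^k`, `y = b^{m-n}`,
`(1 - x)(y x - a) + (1 - a)(y x² - 1) = (1 - a x)(y x - 1)`,
so the partial sums telescope into products, and `g_i = t i · ∑_{j<i} g_j` is the closed form.
-/

open Finset

theorem sum_range_succ_eq_mul_prod_one_add {R : Type*} [CommSemiring R] {g t : ℕ → R} {n : ℕ}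
    (h : ∀ i, 1 ≤ i → i ≤ n → g i = t i * ∑ j ∈ range i, g j) :
    ∀ i ≤ n, ∑ j ∈ range (i + 1), g j = g 0 * ∏ k ∈ Icc 1 i, (1 + t k) := by
  intro i
  induction i with
  | zero => simp
  | succ i ih =>
    intro hin
    rw [sum_range_succ, h (i + 1) (by omega) hin, ← one_add_mul, mul_comm, ih (by omega),
      prod_Icc_succ_top (by omega), mul_assoc]

section JingJozefiak

variable {F : Type*} [Field F] (a b : F) (c : ℕ)

/-- The factor multiplying `∑_{j<i} g_j` in the recursion, with `c = m - n`. -/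
def jingJozefiakCoeff (i : ℕ) : F :=
  (1 - a) * (b ^ (c + 2 * i) - 1) / ((1 - b ^ i) * (b ^ (c + i) - a))

variable {a b c}

theorem one_add_jingJozefiakCoeff {i : ℕ} (hb : 1 - b ^ i ≠ 0) (hba : b ^ (c + i) - a ≠ 0) :
    1 + jingJozefiakCoeff a b c i =
      (1 - a * b ^ i) * (b ^ (c + i) - 1) / ((1 - b ^ i) * (b ^ (c + i) - a)) := by
  rw [jingJozefiakCoeff, eq_div_iff (mul_ne_zero hb hba), add_mul,
    div_mul_cancel₀ _ (mul_ne_zero hb hba)]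
  ring

theorem prod_one_add_jingJozefiakCoeff {j : ℕ}
    (hb : ∀ k ∈ Icc 1 j, 1 - b ^ k ≠ 0) (hba : ∀ k ∈ Icc 1 j, b ^ (c + k) - a ≠ 0) :
    ∏ k ∈ Icc 1 j, (1 + jingJozefiakCoeff a b c k) =
      (∏ k ∈ Icc 1 j, (1 - a * b ^ k)) * (∏ k ∈ Icc 1 j, (b ^ (c + k) - 1)) /
        ((∏ k ∈ Icc 1 j, (1 - b ^ k)) * ∏ k ∈ Icc 1 j, (b ^ (c + k) - a)) := by
  rw [prod_congr rfl fun k hk => one_add_jingJozefiakCoeff (hb k hk) (hba k hk),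
    prod_div_distrib, prod_mul_distrib, prod_mul_distrib]

end JingJozefiak

theorem jing_jozefiak_formula_general
    (F : Type*) [Field F] (a b : F) (m n : ℕ)
    (hb : ∀ i : ℕ, 1 ≤ i → i ≤ n → b ^ i ≠ 1)
    (hba : ∀ i : ℕ, 1 ≤ i → i ≤ n → b ^ (m - n + i) ≠ a)
    (g : ℕ → F) (hg0 : g 0 = 1)
    (hrec : ∀ i : ℕ, 1 ≤ i → i ≤ n →
      g i = (1 - a) * (b ^ (m - n + 2 * i) - 1) /
          ((1 - b ^ i) * (b ^ (m - n + i) - a)) * ∑ j ∈ Finset.range i, g j) :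
    ∀ i : ℕ, 1 ≤ i → i ≤ n →
      g i = (∏ k ∈ Finset.range i, (1 - a * b ^ k)) /
              (∏ k ∈ Finset.Icc 1 i, (1 - b ^ k)) *
            ((∏ k ∈ Finset.Icc 1 (i - 1), (b ^ (m - n + k) - 1)) /
              (∏ k ∈ Finset.Icc 1 i, (b ^ (m - n + k) - a))) *
            (b ^ (m - n + 2 * i) - 1) := by
  intro i hi hin
  obtain ⟨j, rfl⟩ : ∃ j, i = j + 1 := ⟨i - 1, by omega⟩
  have hb' : ∀ k ∈ Icc 1 (j + 1), 1 - b ^ k ≠ 0 := fun k hk =>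
    sub_ne_zero.mpr (hb k (mem_Icc.mp hk).1 ((mem_Icc.mp hk).2.trans hin)).symm
  have hba' : ∀ k ∈ Icc 1 (j + 1), b ^ (m - n + k) - a ≠ 0 := fun k hk =>
    sub_ne_zero.mpr (hba k (mem_Icc.mp hk).1 ((mem_Icc.mp hk).2.trans hin))
  have hj : Icc 1 j ⊆ Icc 1 (j + 1) := Icc_subset_Icc_right j.le_succ
  have hlast : j + 1 ∈ Icc 1 (j + 1) := right_mem_Icc.mpr hi
  rw [hrec (j + 1) hi hin,
    sum_range_succ_eq_mul_prod_one_add (t := jingJozefiakCoeff a b (m - n)) hrec j (by omega),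
    hg0, one_mul,
    prod_one_add_jingJozefiakCoeff (fun k hk => hb' k (hj hk)) (fun k hk => hba' k (hj hk)),
    prod_range_eq_mul_Ico (n := j + 1) _ (by omega), Ico_add_one_right_eq_Icc, Nat.add_sub_cancel,
    prod_Icc_succ_top hi, prod_Icc_succ_top hi, pow_zero, mul_one]
  have hb_prod := prod_ne_zero_iff.mpr fun k hk => hb' k (hj hk)
  have hba_prod := prod_ne_zero_iff.mpr fun k hk => hba' k (hj hk)
  have hb_last := hb' _ hlast
  have hba_last := hba' _ hlast
  field_simp

/-- **Theorem 4.7 (Jing–Józefiak formula)** : the coefficients defined by the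
recursion `g_0 = 1`, `g_i = (1-a)(b^{m-n+2i}-1)/((1-b^i)(b^{m-n+i}-a)) · Σ_{j<i} g_j`
are given in closed form by
`g_i = [Π_{k=0}^{i-1}(1-a b^k)/Π_{k=1}^{i}(1-b^k)]
 · [Π_{k=1}^{i-1}(b^{m-n+k}-1)/Π_{k=1}^{i}(b^{m-n+k}-a)] · (b^{m-n+2i}-1)`. -/
theorem jing_jozefiak_formula
    (F : Type*) [Field F] (a b : F) (m n : ℕ) (hmn : n ≤ m) (hn : 1 ≤ n)
    (hb : ∀ i : ℕ, 1 ≤ i → i ≤ n → b ^ i ≠ 1)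
    (hba : ∀ i : ℕ, 1 ≤ i → i ≤ n → b ^ (m - n + i) ≠ a)
    (g : ℕ → F) (hg0 : g 0 = 1)
    (hrec : ∀ i : ℕ, 1 ≤ i → i ≤ n →
      g i = (1 - a) * (b ^ (m - n + 2 * i) - 1) /
          ((1 - b ^ i) * (b ^ (m - n + i) - a)) * ∑ j ∈ Finset.range i, g j) :
    ∀ i : ℕ, 1 ≤ i → i ≤ n →
      g i = (∏ k ∈ Finset.range i, (1 - a * b ^ k)) /
              (∏ k ∈ Finset.Icc 1 i, (1 - b ^ k)) *
            ((∏ k ∈ Finset.Icc 1 (i - 1), (b ^ (m - n + k) - 1)) /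
              (∏ k ∈ Finset.Icc 1 i, (b ^ (m - n + k) - a))) *
            (b ^ (m - n + 2 * i) - 1) :=
  jing_jozefiak_formula_general F a b m n hb hba g hg0 hrec
end

section
/- Let λ and μ be partitions of the same weight with μ ≥ λ in dominance order, and let ν be any partition. Then μ∪ν ≥ λ∪ν in dominance order. -/
/-!
The `i`-th partial sum of a decreasingly sorted multiset is the largest sum of a sub-multiset with
at most `i` elements. A sub-multiset of `λ ∪ ν` splits as `a + b` with `a ≤ λ` and `b ≤ ν`. As `λ`
is sorted, the sum of `a` is at most the partial sum of `λ` of length `|a|`, hence at most that of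
`μ`; so replacing `a` by the first `|a|` parts of `μ` yields a sub-multiset of `μ ∪ ν` of no larger
size and no smaller sum.
-/

section SumTake

variable {α : Type*} [AddCommMonoid α] [PartialOrder α] [IsOrderedAddMonoid α]
  [CanonicallyOrderedAdd α]

lemma List.sum_take_succ_le_add_sum_take {s : List α} {a : α} (h : ∀ x ∈ s, x ≤ a) (i : ℕ) :
    (s.take (i + 1)).sum ≤ a + (s.take i).sum := by
  rw [List.take_add_one, List.sum_append, add_comm a]
  rcases hi : s[i]? with _ | x
  · simp
  · simpa using add_le_add_right (h x (List.mem_of_getElem? hi)) _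

lemma List.Sublist.sum_le_sum_take_s18 {t s : List α} (hts : t.Sublist s) (hs : s.Pairwise (· ≥ ·))
    {i : ℕ} (hi : t.length ≤ i) : t.sum ≤ (s.take i).sum := by
  induction hts generalizing i with
  | slnil => simp
  | cons a _ ih =>
    rw [List.pairwise_cons] at hs
    refine (ih hs.2 hi).trans ?_
    cases i with
    | zero => simp
    | succ n => simpa using List.sum_take_succ_le_add_sum_take hs.1 n
  | cons_cons a _ ih =>
    rw [List.pairwise_cons] at hs
    cases i with
    | zero => simp at hi
    | succ n => simpa using add_le_add_right (ih hs.2 (Nat.le_of_succ_le_succ hi)) a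

lemma Multiset.sum_le_sum_take_of_le {s : List α} (hs : s.Pairwise (· ≥ ·)) {t : Multiset α}
    (ht : t ≤ s) {i : ℕ} (hi : card t ≤ i) : t.sum ≤ (s.take i).sum := by
  rcases t with ⟨t⟩
  obtain ⟨t', hperm, hts⟩ := ht
  rw [Multiset.quot_mk_to_coe'', Multiset.sum_coe, ← hperm.sum_eq]
  exact hts.sum_le_sum_take_s18 hs (hperm.length_eq ▸ hi)

end SumTake

lemma Multiset.exists_eq_add_of_le_add {α : Type*} [DecidableEq α] {t s r : Multiset α}
    (h : t ≤ s + r) : ∃ a ≤ s, ∃ b ≤ r, t = a + b :=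
  ⟨t ∩ s, Multiset.inter_le_right, t - s, Multiset.sub_le_iff_le_add'.2 h,
    by rw [add_comm, Multiset.sub_add_inter]⟩

lemma coe_take_sortDesc_le (m : Multiset ℕ) (i : ℕ) : ((sortDesc m).take i : Multiset ℕ) ≤ m :=
  (Multiset.coe_le.2 (List.take_sublist i _).subperm).trans_eq (Multiset.sort_eq _ _)

lemma sum_le_sum_take_sortDesc {m t : Multiset ℕ} (ht : t ≤ m) {i : ℕ}
    (hi : Multiset.card t ≤ i) : t.sum ≤ ((sortDesc m).take i).sum :=
  Multiset.sum_le_sum_take_of_le (Multiset.pairwise_sort _ _) (by rwa [Multiset.sort_eq]) hi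

lemma dominates_sortDesc_of_forall_le {m m' : Multiset ℕ}
    (h : ∀ t ≤ m, ∃ u ≤ m', Multiset.card u ≤ Multiset.card t ∧ t.sum ≤ u.sum) :
    Dominates (sortDesc m') (sortDesc m) := by
  intro i
  obtain ⟨u, hu, hcard, hsum⟩ := h _ (coe_take_sortDesc_le m i)
  rw [Multiset.sum_coe] at hsum
  refine hsum.trans (sum_le_sum_take_sortDesc hu (hcard.trans ?_))
  simp

lemma Dominates.sum_le_sum_take_s18 {μ l : List ℕ} (hdom : Dominates μ l) (hl : l.Pairwise (· ≥ ·))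
    {a : Multiset ℕ} (ha : a ≤ l) : a.sum ≤ (μ.take (Multiset.card a)).sum :=
  (Multiset.sum_le_sum_take_of_le hl ha le_rfl).trans (hdom _)

theorem dominance_union_general
    (l μ ν : List ℕ)
    (hl : IsPartitionList l)
    (hdom : Dominates μ l) :
    Dominates (sortDesc ((μ : Multiset ℕ) + (ν : Multiset ℕ)))
      (sortDesc ((l : Multiset ℕ) + (ν : Multiset ℕ))) := by
  refine dominates_sortDesc_of_forall_le fun t ht => ?_
  obtain ⟨a, ha, b, hb, rfl⟩ := Multiset.exists_eq_add_of_le_add ht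
  refine ⟨μ.take (Multiset.card a) + b, add_le_add ?_ hb, ?_, ?_⟩
  · exact Multiset.coe_le.2 (List.take_sublist _ _).subperm
  · simp
  · simpa using add_le_add_right (hdom.sum_le_sum_take_s18 hl.1 ha) b.sum

/-- **Union property of dominance order.**  If `μ ≥ λ` (same weight) and `ν` is any
partition then `μ∪ν ≥ λ∪ν`, where `∪` adds multiplicities (i.e. reorders the
concatenation decreasingly). -/
theorem dominance_union
    (l μ ν : List ℕ)
    (hl : IsPartitionList l) (hμ : IsPartitionList μ) (hν : IsPartitionList ν)
    (hw : μ.sum = l.sum) (hdom : Dominates μ l) :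
    Dominates (sortDesc ((μ : Multiset ℕ) + (ν : Multiset ℕ)))
      (sortDesc ((l : Multiset ℕ) + (ν : Multiset ℕ))) :=
  dominance_union_general l μ ν hl hdom
end
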